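/- arXiv:2302.07462 — 6 statements merged into one kernel-verified Lean document; each statement's English description precedes it below -/
import Mathlib

section
/- (Hoffman–Wielandt inequality) Let A and E be real symmetric (n+1)×(n+1) matrices, and for a real symmetric (n+1)×(n+1) matrix B let λ_0(B) ≥ λ_1(B) ≥ ⋯ ≥ λ_n(B) denote its eigenvalues listed in decreasing order (with multiplicity). Then Σ_{k=0}^{n} (λ_k(A+E) − λ_k(A))² ≤ ‖E‖_F². -/
open Matrix Finset

/-- The spectral norm (operator 2-norm) of a real square matrix. -/
noncomputable def spec {M : ℕ} (A : Matrix (Fin M) (Fin M) ℝ) : ℝ :=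
  ‖LinearMap.toContinuousLinearMap (Matrix.toEuclideanLin A)‖

/-- The squared Frobenius norm of a real matrix. -/
noncomputable def frobSq {m l : ℕ} (A : Matrix (Fin m) (Fin l) ℝ) : ℝ :=
  ∑ i, ∑ j, (A i j) ^ 2

/-- The squared Euclidean norm of a real vector. -/
noncomputable def vecNormSq {M : ℕ} (x : Fin M → ℝ) : ℝ := ∑ i, (x i) ^ 2

/-- The Euclidean norm of a real vector. -/
noncomputable def vecNorm {M : ℕ} (x : Fin M → ℝ) : ℝ := Real.sqrt (∑ i, (x i) ^ 2)

/-- The M×(n+1) matrix whose columns are the vectors `v 0, …, v n`. -/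
noncomputable def colMat {M n : ℕ} (v : Fin (n + 1) → Fin M → ℝ) :
    Matrix (Fin M) (Fin (n + 1)) ℝ :=
  Matrix.of fun i k => v k i

/-! Write `A = U diag(a) Uᵀ` and `A + E = V diag(b) Vᵀ` with `U`, `V` orthogonal, and
`W = Vᵀ U`. Since `Vᵀ E U = diag(b) W - W diag(a)`, orthogonal invariance of the Frobenius norm
gives `‖E‖_F² = ∑ᵢⱼ Wᵢⱼ² (bᵢ - aⱼ)²`. The matrix `(Wᵢⱼ²)` is doubly stochastic, so by Birkhoff's
theorem this linear expression is a convex combination of its values `∑ᵢ (bᵢ - a_{σ i})²` at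
permutation matrices, and by the rearrangement inequality each of these is at least the value at
the permutation that pairs both spectra in decreasing order. -/

section DoublyStochastic

variable {R ι : Type*} [Field R] [LinearOrder R] [IsStrictOrderedRing R]
  [Fintype ι] [DecidableEq ι]

theorem le_sum_sum_mul_of_mem_doublyStochastic {c : R} {f : ι → ι → R}
    (hf : ∀ σ : Equiv.Perm ι, c ≤ ∑ i, f i (σ i)) {S : Matrix ι ι R}
    (hS : S ∈ doublyStochastic R ι) : c ≤ ∑ i, ∑ j, S i j * f i j := by
  rw [← SetLike.mem_coe, doublyStochastic_eq_convexHull_permMatrix] at hS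
  refine convexHull_min (t := {T | c ≤ ∑ i, ∑ j, T i j * f i j}) ?_ ?_ hS
  · rintro _ ⟨σ, rfl⟩
    simpa [Equiv.Perm.permMatrix, PEquiv.toMatrix_apply, Equiv.toPEquiv_apply] using hf σ
  · intro P (hP : c ≤ _) Q (hQ : c ≤ _) a b ha hb hab
    have hsum : ∑ i, ∑ j, (a • P + b • Q) i j * f i j
        = a * ∑ i, ∑ j, P i j * f i j + b * ∑ i, ∑ j, Q i j * f i j := by
      simp only [Matrix.add_apply, Matrix.smul_apply, smul_eq_mul, add_mul, mul_assoc,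
        sum_add_distrib, mul_sum]
    calc c = a * c + b * c := by rw [← add_mul, hab, one_mul]
      _ ≤ _ := add_le_add (mul_le_mul_of_nonneg_left hP ha) (mul_le_mul_of_nonneg_left hQ hb)
      _ = _ := hsum.symm

end DoublyStochastic

theorem Monovary.sum_sub_sq_le_sum_sub_comp_perm_sq {ι R : Type*} [Fintype ι]
    [CommRing R] [LinearOrder R] [IsStrictOrderedRing R] {x y : ι → R}
    (hxy : Monovary x y) (σ : Equiv.Perm ι) :
    ∑ i, (x i - y i) ^ 2 ≤ ∑ i, (x i - y (σ i)) ^ 2 := by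
  have hy : ∑ i, y (σ i) ^ 2 = ∑ i, y i ^ 2 := Equiv.sum_comp σ (fun i => y i ^ 2)
  have := hxy.sum_mul_comp_perm_le_sum_mul (σ := σ)
  simp only [sub_sq, sum_add_distrib, sum_sub_distrib, mul_assoc, ← mul_sum, hy]
  linarith

theorem Matrix.sq_entries_mem_doublyStochastic {ι : Type*} [Fintype ι] [DecidableEq ι]
    {W : Matrix ι ι ℝ} (hW : W ∈ unitaryGroup ι ℝ) :
    (Matrix.of fun i j => W i j ^ 2) ∈ doublyStochastic ℝ ι := by
  refine mem_doublyStochastic_iff_sum.2 ⟨fun i j => sq_nonneg _, fun i => ?_, fun j => ?_⟩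
  · simpa [mul_apply, one_apply, sq] using congr_fun₂ (mem_unitaryGroup_iff.1 hW) i i
  · simpa [mul_apply, one_apply, sq] using congr_fun₂ (mem_unitaryGroup_iff'.1 hW) j j

namespace Matrix.IsHermitian

variable {ι : Type*} [Fintype ι] [DecidableEq ι] {A : Matrix ι ι ℝ} (hA : A.IsHermitian)

theorem spectral_theorem_real :
    A = hA.eigenvectorUnitary * diagonal hA.eigenvalues
      * star (hA.eigenvectorUnitary : Matrix ι ι ℝ) := by
  simpa using hA.spectral_theorem

theorem mul_eigenvectorUnitary :
    A * hA.eigenvectorUnitary = hA.eigenvectorUnitary * diagonal hA.eigenvalues := by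
  conv_lhs => enter [1]; rw [hA.spectral_theorem_real]
  simp [Matrix.mul_assoc]

theorem star_eigenvectorUnitary_mul :
    star (hA.eigenvectorUnitary : Matrix ι ι ℝ) * A
      = diagonal hA.eigenvalues * star (hA.eigenvectorUnitary : Matrix ι ι ℝ) := by
  conv_lhs => enter [2]; rw [hA.spectral_theorem_real]
  simp [← Matrix.mul_assoc]

end Matrix.IsHermitian

section Frobenius

variable {m : ℕ}

theorem frobSq_eq_trace (M : Matrix (Fin m) (Fin m) ℝ) : frobSq M = (star M * M).trace := by
  simp only [frobSq, trace, Matrix.diag, mul_apply, star_apply, star_trivial, sq]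
  exact sum_comm

theorem frobSq_unitary_mul_mul_unitary {U V : Matrix (Fin m) (Fin m) ℝ}
    (hU : U ∈ unitaryGroup (Fin m) ℝ) (hV : V ∈ unitaryGroup (Fin m) ℝ)
    (B : Matrix (Fin m) (Fin m) ℝ) : frobSq (U * B * V) = frobSq B := by
  have h : star (U * B * V) * (U * B * V) = star V * (star B * B * V) := by
    simp only [star_mul, Matrix.mul_assoc]
    rw [← Matrix.mul_assoc (star U) U, mem_unitaryGroup_iff'.1 hU, Matrix.one_mul]
  rw [frobSq_eq_trace, frobSq_eq_trace, h, trace_mul_comm, Matrix.mul_assoc,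
    mem_unitaryGroup_iff.1 hV, Matrix.mul_one]

theorem frobSq_sub_eq_of_diagonalize {A B U V : Matrix (Fin m) (Fin m) ℝ} {a b : Fin m → ℝ}
    (hU : U ∈ unitaryGroup (Fin m) ℝ) (hV : V ∈ unitaryGroup (Fin m) ℝ)
    (hA : A * U = U * diagonal a) (hB : star V * B = diagonal b * star V) :
    frobSq (B - A) = ∑ i, ∑ j, (star V * U) i j ^ 2 * (b i - a j) ^ 2 := by
  have hconj : star V * (B - A) * U = diagonal b * (star V * U) - star V * U * diagonal a := by
    rw [Matrix.mul_sub, Matrix.sub_mul, hB, Matrix.mul_assoc _ A, hA, Matrix.mul_assoc,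
      Matrix.mul_assoc]
  rw [← frobSq_unitary_mul_mul_unitary (Unitary.star_mem hV) hU, hconj]
  simp only [frobSq, Matrix.sub_apply, diagonal_mul, mul_diagonal]
  exact sum_congr rfl fun i _ => sum_congr rfl fun j _ => by ring

end Frobenius

/-- **Hoffman–Wielandt inequality.** If `A` and `E` are real symmetric
`(n+1)×(n+1)` matrices and `μA`, `μAE` are the eigenvalues of `A` and `A + E`
listed in decreasing order (with multiplicity), then
`∑ k, (λ_k(A+E) - λ_k(A))² ≤ ‖E‖_F²`. -/
theorem hoffman_wielandt {n : ℕ} (A E : Matrix (Fin (n + 1)) (Fin (n + 1)) ℝ)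
    (hA : A.IsHermitian) (hE : E.IsHermitian)
    (μA μAE : Fin (n + 1) → ℝ)
    (σA : Equiv.Perm (Fin (n + 1))) (hμA : μA = hA.eigenvalues ∘ σA) (hμA' : Antitone μA)
    (σAE : Equiv.Perm (Fin (n + 1))) (hμAE : μAE = (hA.add hE).eigenvalues ∘ σAE)
    (hμAE' : Antitone μAE) :
    ∑ k, (μAE k - μA k) ^ 2 ≤ frobSq E := by
  have hAE := hA.add hE
  set U := hA.eigenvectorUnitary
  set V := hAE.eigenvectorUnitary
  have hfrob := frobSq_sub_eq_of_diagonalize U.2 V.2 hA.mul_eigenvectorUnitary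
    hAE.star_eigenvectorUnitary_mul
  rw [add_sub_cancel_left] at hfrob
  rw [hfrob]
  refine le_sum_sum_mul_of_mem_doublyStochastic (fun σ => ?_)
    (sq_entries_mem_doublyStochastic (mul_mem (Unitary.star_mem V.2) U.2))
  -- `μA (σA⁻¹ (σ (σAE k))) = λ(A) (σ (σAE k))`, so reindexing by `σAE` gives the sum for `σ`
  calc ∑ k, (μAE k - μA k) ^ 2
      ≤ ∑ k, (μAE k - μA (σAE.trans (σ.trans σA.symm) k)) ^ 2 :=
        (hμAE'.monovary hμA').sum_sub_sq_le_sum_sub_comp_perm_sq _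
    _ = ∑ i, (hAE.eigenvalues i - hA.eigenvalues (σ i)) ^ 2 := by
        subst hμA hμAE
        simpa using Equiv.sum_comp σAE fun i => (hAE.eigenvalues i - hA.eigenvalues (σ i)) ^ 2
end

section
/- Let 𝒜 be a real symmetric positive semidefinite M×M matrix and τ ≥ 0 be such that ‖I − τ𝒜‖₂ ≤ 1. Then for every n ≥ 1, ‖(I + τ𝒜)^{−n} − (I − τ𝒜)ⁿ‖₂ ≤ n τ² ‖𝒜‖₂². -/
/-!
Write `B = (I + τ𝒜)⁻¹` and `C = I - τ𝒜`. Both are contractions: `C` by hypothesis, and `B`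
because `‖x‖² ≤ ⟪x, (I + τ𝒜) x⟫ ≤ ‖x‖ ‖(I + τ𝒜) x‖` for positive semidefinite `𝒜`.
Telescoping `Bⁿ⁺¹ - Cⁿ⁺¹ = B (Bⁿ - Cⁿ) + (B - C) Cⁿ` then gives `‖Bⁿ - Cⁿ‖ ≤ n ‖B - C‖`,
and `B - C = (τ𝒜)² B` has norm at most `τ² ‖𝒜‖²`.
-/

open Matrix Finset

-- Under this norm, `spec A` and `‖A‖` are definitionally equal.
open scoped Matrix.Norms.L2Operator ComplexOrder

theorem LinearMap.IsPositive.norm_le_norm_add_apply {𝕜 E : Type*} [RCLike 𝕜]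
    [NormedAddCommGroup E] [InnerProductSpace 𝕜 E] {T : E →ₗ[𝕜] E} (hT : T.IsPositive)
    (x : E) : ‖x‖ ≤ ‖x + T x‖ := by
  have key : ‖x‖ * ‖x‖ ≤ ‖x + T x‖ * ‖x‖ :=
    calc ‖x‖ * ‖x‖ = RCLike.re (inner 𝕜 x x) := by rw [inner_self_eq_norm_mul_norm]
      _ ≤ RCLike.re (inner 𝕜 (x + T x) x) := by
        rw [inner_add_left, map_add]; linarith [hT.re_inner_nonneg_left x]
      _ ≤ ‖x + T x‖ * ‖x‖ := re_inner_le_norm _ _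
  rcases (norm_nonneg x).eq_or_lt with h | h
  · rw [← h]; exact norm_nonneg _
  · exact le_of_mul_le_mul_right key h

theorem Matrix.l2_opNorm_inv_one_add_le_one {𝕜 n : Type*} [RCLike 𝕜] [Fintype n]
    [DecidableEq n] {A : Matrix n n 𝕜} (hA : A.PosSemidef) : ‖(1 + A)⁻¹‖ ≤ 1 := by
  have hunit : IsUnit (1 + A).det :=
    (isUnit_iff_isUnit_det _).mp (PosDef.one.add_posSemidef hA).isUnit
  rw [cstar_norm_def]
  refine ContinuousLinearMap.opNorm_le_bound _ zero_le_one fun x => ?_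
  set y := toEuclideanCLM (n := n) (𝕜 := 𝕜) (1 + A)⁻¹ x
  calc ‖y‖ ≤ ‖y + toEuclideanLin A y‖ :=
        (isPositive_toEuclideanLin_iff.2 hA).norm_le_norm_add_apply y
    _ = ‖toEuclideanCLM (n := n) (𝕜 := 𝕜) ((1 + A) * (1 + A)⁻¹) x‖ := by
        rw [map_mul, map_add, map_one]; rfl
    _ = 1 * ‖x‖ := by rw [mul_nonsing_inv _ hunit, map_one, one_mul]; rfl

section SeminormedRing

variable {R : Type*} [SeminormedRing R]

theorem norm_mul_pow_le_of_norm_le_one {c : R} (hc : ‖c‖ ≤ 1) (a : R) (n : ℕ) :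
    ‖a * c ^ n‖ ≤ ‖a‖ := by
  cases n with
  | zero => rw [pow_zero, mul_one]
  | succ n =>
    calc ‖a * c ^ (n + 1)‖ ≤ ‖a‖ * ‖c‖ ^ (n + 1) :=
          (norm_mul_le _ _).trans (by gcongr; exact norm_pow_le' c n.succ_pos)
      _ ≤ ‖a‖ := mul_le_of_le_one_right (norm_nonneg a) (pow_le_one₀ (norm_nonneg c) hc)

theorem norm_pow_sub_pow_le_of_norm_le_one {b c : R} (hb : ‖b‖ ≤ 1) (hc : ‖c‖ ≤ 1) (n : ℕ) :
    ‖b ^ n - c ^ n‖ ≤ n * ‖b - c‖ := by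
  induction n with
  | zero => simp
  | succ n ih =>
    have telescope : b ^ (n + 1) - c ^ (n + 1) = b * (b ^ n - c ^ n) + (b - c) * c ^ n := by
      rw [mul_sub, sub_mul, sub_add_sub_cancel, pow_succ', pow_succ']
    calc ‖b ^ (n + 1) - c ^ (n + 1)‖ ≤ ‖b‖ * ‖b ^ n - c ^ n‖ + ‖b - c‖ := by
          rw [telescope]
          exact (norm_add_le _ _).trans
            (add_le_add (norm_mul_le _ _) (norm_mul_pow_le_of_norm_le_one hc (b - c) n))
      _ ≤ n * ‖b - c‖ + ‖b - c‖ :=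
          add_le_add ((mul_le_of_le_one_left (norm_nonneg _) hb).trans ih) le_rfl
      _ = (n + 1 : ℕ) * ‖b - c‖ := by push_cast; ring

theorem norm_sub_one_sub_le_sq_of_mul_eq_one {x b : R} (h : (1 + x) * b = 1) (hb : ‖b‖ ≤ 1) :
    ‖b - (1 - x)‖ ≤ ‖x‖ ^ 2 := by
  have hdiff : b - (1 - x) = x ^ 2 * b :=
    calc b - (1 - x) = b - (1 - x) * ((1 + x) * b) := by rw [h, mul_one]
      _ = x ^ 2 * b := by noncomm_ring
  calc ‖b - (1 - x)‖ ≤ ‖x ^ 2‖ * ‖b‖ := hdiff ▸ norm_mul_le _ _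
    _ ≤ ‖x ^ 2‖ := mul_le_of_le_one_right (norm_nonneg _) hb
    _ ≤ ‖x‖ ^ 2 := norm_pow_le' x two_pos

end SeminormedRing

/-- If `𝒜` is real symmetric positive semidefinite, `τ ≥ 0` and `‖I - τ𝒜‖₂ ≤ 1`,
then for every `n ≥ 1`, `‖(I + τ𝒜)⁻ⁿ - (I - τ𝒜)ⁿ‖₂ ≤ n τ² ‖𝒜‖₂²`. -/
theorem inverse_power_perturbation {M : ℕ} (A : Matrix (Fin M) (Fin M) ℝ)
    (hA : A.PosSemidef) (τ : ℝ) (hτ : 0 ≤ τ) (h1 : spec (1 - τ • A) ≤ 1) :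
    ∀ n : ℕ, 1 ≤ n →
      spec (((1 + τ • A)⁻¹) ^ n - (1 - τ • A) ^ n) ≤ (n : ℝ) * τ ^ 2 * (spec A) ^ 2 := by
  intro n _
  have hτA : (τ • A).PosSemidef := hA.smul hτ
  have hunit : IsUnit (1 + τ • A).det :=
    (isUnit_iff_isUnit_det _).mp (PosDef.one.add_posSemidef hτA).isUnit
  have hinv : ‖(1 + τ • A)⁻¹‖ ≤ 1 := l2_opNorm_inv_one_add_le_one hτA
  calc spec ((1 + τ • A)⁻¹ ^ n - (1 - τ • A) ^ n)
      ≤ n * ‖(1 + τ • A)⁻¹ - (1 - τ • A)‖ := norm_pow_sub_pow_le_of_norm_le_one hinv h1 n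
    _ ≤ n * ‖τ • A‖ ^ 2 := by
        gcongr; exact norm_sub_one_sub_le_sq_of_mul_eq_one (mul_nonsing_inv _ hunit) hinv
    _ = n * τ ^ 2 * spec A ^ 2 := by
        rw [norm_smul, Real.norm_of_nonneg hτ, mul_pow, mul_assoc]; rfl
end

section
/- Let 𝑴 be a real symmetric positive definite M×M matrix with unique symmetric positive definite square root 𝑴^{1/2} and 𝑴^{−1/2} = (𝑴^{1/2})^{−1}. Let 𝒜 be a real symmetric M×M matrix and τ ≥ 0 with ‖I − τ𝒜‖₂ ≤ 1 and τ‖𝒜‖₂ ≤ 1. Let U₀ ∈ ℝ^M, and for k = 0, 1, …, n define U*_k = 𝑴^{−1/2}(I − τ𝒜)^k 𝑴^{1/2} U₀ and Ū*_k = (1 − τ‖𝒜‖₂)^k U₀; let U* and Ū* be the M×(n+1) matrices with these columns. Then ‖U* − Ū*‖_F² ≤ τ² (Σ_{k=1}^{n} k²) ‖𝑴^{−1/2}‖₂² ‖𝑴^{1/2}‖₂² ‖ ‖𝒜‖₂ I − 𝒜 ‖₂² ‖U₀‖₂². In particular ‖U* − Ū*‖_F² ≤ n³ τ² ‖𝑴^{−1/2}‖₂²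 ‖𝑴^{1/2}‖₂² ‖ ‖𝒜‖₂ I − 𝒜 ‖₂² ‖U₀‖₂². -/
open Matrix Finset

namespace SpecAux

variable {M : ℕ}

noncomputable def tc (A : Matrix (Fin M) (Fin M) ℝ) :
    EuclideanSpace ℝ (Fin M) →L[ℝ] EuclideanSpace ℝ (Fin M) :=
  LinearMap.toContinuousLinearMap (Matrix.toEuclideanLin A)

lemma spec_eq (A : Matrix (Fin M) (Fin M) ℝ) : spec A = ‖tc A‖ := rfl

lemma tc_apply (A : Matrix (Fin M) (Fin M) ℝ) (x : EuclideanSpace ℝ (Fin M)) :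
    tc A x = (WithLp.equiv 2 (Fin M → ℝ)).symm (A.mulVec (WithLp.equiv 2 (Fin M → ℝ) x)) := rfl

lemma tc_mul (A B : Matrix (Fin M) (Fin M) ℝ) : tc (A * B) = (tc A).comp (tc B) := by
  ext x
  simp [tc_apply, Matrix.mulVec_mulVec]

lemma tc_add (A B : Matrix (Fin M) (Fin M) ℝ) : tc (A + B) = tc A + tc B := by
  ext x; simp [tc, map_add]

lemma tc_smul (c : ℝ) (A : Matrix (Fin M) (Fin M) ℝ) : tc (c • A) = c • tc A := by
  ext x; simp [tc, _root_.map_smul]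

lemma spec_mul_le (A B : Matrix (Fin M) (Fin M) ℝ) : spec (A * B) ≤ spec A * spec B := by
  rw [spec_eq, spec_eq, spec_eq, tc_mul]; exact ContinuousLinearMap.opNorm_comp_le _ _

lemma spec_add_le (A B : Matrix (Fin M) (Fin M) ℝ) : spec (A + B) ≤ spec A + spec B := by
  rw [spec_eq, spec_eq, spec_eq, tc_add]; exact norm_add_le _ _

lemma spec_smul (c : ℝ) (A : Matrix (Fin M) (Fin M) ℝ) : spec (c • A) = |c| * spec A := by
  rw [spec_eq, spec_eq, tc_smul]
  exact (norm_smul c (tc A)).trans (by rw [Real.norm_eq_abs])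

lemma spec_zero : spec (0 : Matrix (Fin M) (Fin M) ℝ) = 0 := by
  have : tc (0 : Matrix (Fin M) (Fin M) ℝ) = 0 := by ext x; simp [tc_apply]
  rw [spec_eq, this, norm_zero]

lemma spec_nonneg (A : Matrix (Fin M) (Fin M) ℝ) : 0 ≤ spec A := norm_nonneg _

lemma vecNormSq_eq (x : Fin M → ℝ) :
    vecNormSq x = ‖(WithLp.equiv 2 (Fin M → ℝ)).symm x‖ ^ 2 := by
  rw [EuclideanSpace.norm_eq, Real.sq_sqrt (by positivity)]
  simp [vecNormSq, sq_abs]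

lemma vecNormSq_nonneg (x : Fin M → ℝ) : 0 ≤ vecNormSq x := by
  unfold vecNormSq; positivity

lemma vecNormSq_mulVec_le (A : Matrix (Fin M) (Fin M) ℝ) (x : Fin M → ℝ) :
    vecNormSq (A.mulVec x) ≤ spec A ^ 2 * vecNormSq x := by
  rw [vecNormSq_eq, vecNormSq_eq, spec_eq]
  have h : (WithLp.equiv 2 (Fin M → ℝ)).symm (A.mulVec x)
      = tc A ((WithLp.equiv 2 (Fin M → ℝ)).symm x) := by rw [tc_apply]; simp
  rw [h, ← mul_pow]
  exact pow_le_pow_left₀ (norm_nonneg _) ((tc A).le_opNorm _) 2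

lemma spec_pow_sub_le (B : Matrix (Fin M) (Fin M) ℝ) (c : ℝ) (hB : spec B ≤ 1)
    (hc : |c| ≤ 1) (k : ℕ) :
    spec (B ^ k - c ^ k • (1 : Matrix (Fin M) (Fin M) ℝ)) ≤ k * spec (B - c • 1) := by
  induction k with
  | zero => simp [spec_zero]
  | succ k ih =>
    have hid : B ^ (k + 1) - c ^ (k + 1) • (1 : Matrix (Fin M) (Fin M) ℝ)
        = B * (B ^ k - c ^ k • 1) + c ^ k • (B - c • 1) := by
      rw [mul_sub, smul_sub, mul_smul_comm, mul_one, smul_smul, ← pow_succ', ← pow_succ]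
      abel
    have h1' : spec (B * (B ^ k - c ^ k • (1 : Matrix (Fin M) (Fin M) ℝ)))
        ≤ k * spec (B - c • 1) := by
      calc spec (B * (B ^ k - c ^ k • (1 : Matrix (Fin M) (Fin M) ℝ)))
          ≤ spec B * spec (B ^ k - c ^ k • 1) := spec_mul_le _ _
        _ ≤ 1 * (k * spec (B - c • 1)) :=
            mul_le_mul hB ih (spec_nonneg _) zero_le_one
        _ = k * spec (B - c • 1) := one_mul _
    have h2' : spec (c ^ k • (B - c • (1 : Matrix (Fin M) (Fin M) ℝ)))
        ≤ spec (B - c • 1) := by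
      rw [spec_smul, abs_pow]
      calc |c| ^ k * spec (B - c • 1) ≤ 1 * spec (B - c • 1) :=
            mul_le_mul_of_nonneg_right (pow_le_one₀ (abs_nonneg c) hc) (spec_nonneg _)
        _ = _ := one_mul _
    calc spec (B ^ (k + 1) - c ^ (k + 1) • (1 : Matrix (Fin M) (Fin M) ℝ))
        ≤ spec (B * (B ^ k - c ^ k • 1)) + spec (c ^ k • (B - c • 1)) := by
          rw [hid]; exact spec_add_le _ _
      _ ≤ k * spec (B - c • 1) + spec (B - c • 1) := add_le_add h1' h2'
      _ = (k + 1 : ℕ) * spec (B - c • 1) := by push_cast; ring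

lemma frobSq_colMat_sub {n : ℕ} (v w : Fin (n + 1) → Fin M → ℝ) :
    frobSq (colMat v - colMat w) = ∑ k, vecNormSq (v k - w k) := by
  simp only [frobSq, vecNormSq, colMat, Matrix.sub_apply, Matrix.of_apply, Pi.sub_apply]
  exact Finset.sum_comm

end SpecAux

set_option maxHeartbeats 2000000 in
/-- Frobenius bound for the difference `U* - Ū*`, where
`U*_k = 𝑴^{-1/2}(I - τ𝒜)^k 𝑴^{1/2} U₀` and `Ū*_k = (1 - τ‖𝒜‖₂)^k U₀`:
`‖U* - Ū*‖_F² ≤ τ² (∑_{k=1}^n k²) ‖𝑴^{-1/2}‖₂² ‖𝑴^{1/2}‖₂² ‖‖𝒜‖₂ I - 𝒜‖₂² ‖U₀‖₂²`,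
and in particular the same quantity is `≤ n³ τ² ‖𝑴^{-1/2}‖₂² ‖𝑴^{1/2}‖₂² ‖‖𝒜‖₂ I - 𝒜‖₂² ‖U₀‖₂²`. -/
theorem frob_bound_Ustar_sub_Ubar {M n : ℕ} (Mmat Msq A : Matrix (Fin M) (Fin M) ℝ)
    (hM : Mmat.PosDef) (hMsq : Msq.PosDef) (hsq : Msq * Msq = Mmat)
    (hA : A.IsHermitian) (τ : ℝ) (hτ : 0 ≤ τ)
    (h1 : spec (1 - τ • A) ≤ 1) (h2 : τ * spec A ≤ 1)
    (U₀ : Fin M → ℝ) :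
    frobSq ((colMat fun k : Fin (n + 1) =>
          (Msq⁻¹ * (1 - τ • A) ^ (k : ℕ) * Msq).mulVec U₀) -
        colMat fun k : Fin (n + 1) => (1 - τ * spec A) ^ (k : ℕ) • U₀) ≤
      τ ^ 2 * (∑ k ∈ Finset.Icc 1 n, (k : ℝ) ^ 2) * spec Msq⁻¹ ^ 2 * spec Msq ^ 2 *
        spec (spec A • (1 : Matrix (Fin M) (Fin M) ℝ) - A) ^ 2 * vecNormSq U₀ ∧
    frobSq ((colMat fun k : Fin (n + 1) =>
          (Msq⁻¹ * (1 - τ • A) ^ (k : ℕ) * Msq).mulVec U₀) -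
        colMat fun k : Fin (n + 1) => (1 - τ * spec A) ^ (k : ℕ) • U₀) ≤
      (n : ℝ) ^ 3 * τ ^ 2 * spec Msq⁻¹ ^ 2 * spec Msq ^ 2 *
        spec (spec A • (1 : Matrix (Fin M) (Fin M) ℝ) - A) ^ 2 * vecNormSq U₀ := by
  open SpecAux in
  set B : Matrix (Fin M) (Fin M) ℝ := 1 - τ • A with hB
  set c : ℝ := 1 - τ * spec A with hc
  set s : ℝ := spec (spec A • (1 : Matrix (Fin M) (Fin M) ℝ) - A) with hs
  set m1 : ℝ := spec (Msq⁻¹) with hm1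
  set m2 : ℝ := spec Msq with hm2
  have hτs : 0 ≤ τ * spec A := mul_nonneg hτ (SpecAux.spec_nonneg A)
  have hcabs : |c| ≤ 1 := abs_le.mpr ⟨by rw [hc]; linarith, by rw [hc]; linarith⟩
  have hBc : B - c • (1 : Matrix (Fin M) (Fin M) ℝ)
      = τ • (spec A • (1 : Matrix (Fin M) (Fin M) ℝ) - A) := by
    rw [hB, hc]
    module
  have hsBc : spec (B - c • (1 : Matrix (Fin M) (Fin M) ℝ)) = τ * s := by
    rw [hBc, SpecAux.spec_smul, abs_of_nonneg hτ]
  -- inverse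
  have hdet : IsUnit Msq.det := isUnit_iff_ne_zero.mpr hMsq.det_pos.ne'
  have hinv : Msq⁻¹ * Msq = 1 := Matrix.nonsing_inv_mul _ hdet
  -- column identity
  have hcol : ∀ k : ℕ,
      (Msq⁻¹ * B ^ k * Msq).mulVec U₀ - c ^ k • U₀
        = (Msq⁻¹ * (B ^ k - c ^ k • 1) * Msq).mulVec U₀ := by
    intro k
    have key : Msq⁻¹ * (B ^ k - c ^ k • 1) * Msq
        = Msq⁻¹ * B ^ k * Msq - c ^ k • (1 : Matrix (Fin M) (Fin M) ℝ) := by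
      rw [mul_sub, sub_mul, mul_smul_comm, mul_one, Matrix.smul_mul, hinv]
    rw [key, Matrix.sub_mulVec, Matrix.smul_mulVec, Matrix.one_mulVec]
  -- per-column bound
  have hcolbound : ∀ k : ℕ,
      vecNormSq ((Msq⁻¹ * B ^ k * Msq).mulVec U₀ - c ^ k • U₀)
        ≤ (k : ℝ) ^ 2 * (τ ^ 2 * m1 ^ 2 * m2 ^ 2 * s ^ 2 * vecNormSq U₀) := by
    intro k
    rw [hcol k]
    have hspec : spec (Msq⁻¹ * (B ^ k - c ^ k • 1) * Msq)
        ≤ m1 * ((k : ℝ) * (τ * s)) * m2 := by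
      calc spec (Msq⁻¹ * (B ^ k - c ^ k • 1) * Msq)
          ≤ spec (Msq⁻¹ * (B ^ k - c ^ k • 1)) * m2 := SpecAux.spec_mul_le _ _
        _ ≤ m1 * spec (B ^ k - c ^ k • 1) * m2 :=
            mul_le_mul_of_nonneg_right (SpecAux.spec_mul_le _ _) (SpecAux.spec_nonneg _)
        _ ≤ m1 * ((k : ℝ) * (τ * s)) * m2 := by
            have := SpecAux.spec_pow_sub_le B c h1 hcabs k
            rw [hsBc] at this
            exact mul_le_mul_of_nonneg_right
              (mul_le_mul_of_nonneg_left this (SpecAux.spec_nonneg _))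
              (SpecAux.spec_nonneg _)
    calc vecNormSq ((Msq⁻¹ * (B ^ k - c ^ k • 1) * Msq).mulVec U₀)
        ≤ spec (Msq⁻¹ * (B ^ k - c ^ k • 1) * Msq) ^ 2 * vecNormSq U₀ :=
          SpecAux.vecNormSq_mulVec_le _ _
      _ ≤ (m1 * ((k : ℝ) * (τ * s)) * m2) ^ 2 * vecNormSq U₀ :=
          mul_le_mul_of_nonneg_right
            (pow_le_pow_left₀ (SpecAux.spec_nonneg _) hspec 2)
            (SpecAux.vecNormSq_nonneg _)
      _ = (k : ℝ) ^ 2 * (τ ^ 2 * m1 ^ 2 * m2 ^ 2 * s ^ 2 * vecNormSq U₀) := by ring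
  -- the Frobenius sum
  have hfro : frobSq ((colMat fun k : Fin (n + 1) =>
          (Msq⁻¹ * B ^ (k : ℕ) * Msq).mulVec U₀) -
        colMat fun k : Fin (n + 1) => c ^ (k : ℕ) • U₀)
      = ∑ k : Fin (n + 1),
          vecNormSq ((Msq⁻¹ * B ^ (k : ℕ) * Msq).mulVec U₀ - c ^ (k : ℕ) • U₀) :=
    SpecAux.frobSq_colMat_sub _ _
  have hsum : ∑ k ∈ Finset.range (n + 1), (k : ℝ) ^ 2 = ∑ k ∈ Finset.Icc 1 n, (k : ℝ) ^ 2 := by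
    rw [Finset.range_eq_Ico,
      ← Finset.sum_Ico_consecutive (fun k : ℕ => (k : ℝ) ^ 2) (Nat.zero_le 1)
        (Nat.succ_le_succ (Nat.zero_le n))]
    rw [show Finset.Ico 1 (n + 1) = Finset.Icc 1 n from Finset.Ico_add_one_right_eq_Icc 1 n]
    simp
  have hfirst : frobSq ((colMat fun k : Fin (n + 1) =>
          (Msq⁻¹ * B ^ (k : ℕ) * Msq).mulVec U₀) -
        colMat fun k : Fin (n + 1) => c ^ (k : ℕ) • U₀)
      ≤ τ ^ 2 * (∑ k ∈ Finset.Icc 1 n, (k : ℝ) ^ 2) * m1 ^ 2 * m2 ^ 2 * s ^ 2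
          * vecNormSq U₀ := by
    rw [hfro]
    calc ∑ k : Fin (n + 1),
          vecNormSq ((Msq⁻¹ * B ^ (k : ℕ) * Msq).mulVec U₀ - c ^ (k : ℕ) • U₀)
        ≤ ∑ k : Fin (n + 1),
            ((k : ℝ) ^ 2 * (τ ^ 2 * m1 ^ 2 * m2 ^ 2 * s ^ 2 * vecNormSq U₀)) :=
          Finset.sum_le_sum fun k _ => hcolbound (k : ℕ)
      _ = (∑ k ∈ Finset.range (n + 1), (k : ℝ) ^ 2)
            * (τ ^ 2 * m1 ^ 2 * m2 ^ 2 * s ^ 2 * vecNormSq U₀) := by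
          rw [← Finset.sum_mul, Fin.sum_univ_eq_sum_range (fun k : ℕ => (k : ℝ) ^ 2)]
      _ = τ ^ 2 * (∑ k ∈ Finset.Icc 1 n, (k : ℝ) ^ 2) * m1 ^ 2 * m2 ^ 2 * s ^ 2
            * vecNormSq U₀ := by rw [hsum]; ring
  refine ⟨hfirst, hfirst.trans ?_⟩
  have hS : (∑ k ∈ Finset.Icc 1 n, (k : ℝ) ^ 2) ≤ (n : ℝ) ^ 3 := by
    calc ∑ k ∈ Finset.Icc 1 n, (k : ℝ) ^ 2
        ≤ ∑ _k ∈ Finset.Icc 1 n, (n : ℝ) ^ 2 :=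
          Finset.sum_le_sum fun k hk => by
            have hkn : (k : ℝ) ≤ (n : ℝ) := Nat.cast_le.mpr (Finset.mem_Icc.mp hk).2
            exact pow_le_pow_left₀ (Nat.cast_nonneg k) hkn 2
      _ = (n : ℝ) * (n : ℝ) ^ 2 := by
          rw [Finset.sum_const, Nat.card_Icc]
          simp [nsmul_eq_mul]
      _ = (n : ℝ) ^ 3 := by ring
  have hC : 0 ≤ τ ^ 2 * m1 ^ 2 * m2 ^ 2 * s ^ 2 * vecNormSq U₀ := by
    have := SpecAux.vecNormSq_nonneg U₀; positivity
  calc τ ^ 2 * (∑ k ∈ Finset.Icc 1 n, (k : ℝ) ^ 2) * m1 ^ 2 * m2 ^ 2 * s ^ 2 * vecNormSq U₀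
      = (∑ k ∈ Finset.Icc 1 n, (k : ℝ) ^ 2)
          * (τ ^ 2 * m1 ^ 2 * m2 ^ 2 * s ^ 2 * vecNormSq U₀) := by ring
    _ ≤ (n : ℝ) ^ 3 * (τ ^ 2 * m1 ^ 2 * m2 ^ 2 * s ^ 2 * vecNormSq U₀) :=
        mul_le_mul_of_nonneg_right hS hC
    _ = (n : ℝ) ^ 3 * τ ^ 2 * m1 ^ 2 * m2 ^ 2 * s ^ 2 * vecNormSq U₀ := by ring
end

section
/- Let 𝑴 be a real symmetric positive definite M×M matrix with unique symmetric positive definite square root 𝑴^{1/2} and 𝑴^{−1/2} = (𝑴^{1/2})^{−1}. Let 𝒜 be a real symmetric positive semidefinite M×M matrix and τ ≥ 0 with ‖I − τ𝒜‖₂ ≤ 1. Let U₀ ∈ ℝ^M, and for k = 0, 1, …, n define Ũ_k = 𝑴^{−1/2}(I + τ𝒜)^{−k} 𝑴^{1/2} U₀ and U*_k = 𝑴^{−1/2}(I − τ𝒜)^k 𝑴^{1/2} U₀; let Ũ and U* be the M×(n+1) matrices with these columns. Then ‖Ũ − U*‖_F² ≤ τ⁴ ‖𝒜‖₂⁴ (Σ_{k=1}^{n}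 k²) ‖𝑴^{−1/2}‖₂² ‖𝑴^{1/2}‖₂² ‖U₀‖₂². -/
open Matrix Finset

/-!
For positive semidefinite `B` one has `‖(1 + B) y‖ ≥ ‖y‖`, so `‖(1 + B)⁻¹‖₂ ≤ 1`, and
`(1 + B)⁻¹ - (1 - B) = (1 + B)⁻¹ B²` has norm at most `‖B‖₂²`. Telescoping
`a^(k+1) - b^(k+1) = (a^k - b^k) a + b^k (a - b)` between the two contractions `(1 + B)⁻¹` and
`1 - B` gives `‖(1 + B)⁻ᵏ - (1 - B)ᵏ‖₂ ≤ k ‖B‖₂²`. With `B = τ𝒜`, conjugating by `𝑴^{±1/2}` and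
applying to `U₀` bounds the `k`-th column by `k² τ⁴ ‖𝒜‖₂⁴ ‖𝑴^{-1/2}‖₂² ‖𝑴^{1/2}‖₂² ‖U₀‖₂²`, and the
squared Frobenius norm is the sum of the squared column norms.
-/

open scoped Matrix.Norms.L2Operator

lemma spec_eq_norm {M : ℕ} (A : Matrix (Fin M) (Fin M) ℝ) : spec A = ‖A‖ := rfl

lemma vecNormSq_eq_norm_sq {M : ℕ} (x : Fin M → ℝ) :
    vecNormSq x = ‖(EuclideanSpace.equiv (Fin M) ℝ).symm x‖ ^ 2 := by
  rw [EuclideanSpace.real_norm_sq_eq]; rfl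

lemma vecNormSq_nonneg {M : ℕ} (x : Fin M → ℝ) : 0 ≤ vecNormSq x :=
  sum_nonneg fun i _ => sq_nonneg (x i)

lemma vecNormSq_mulVec_le {M : ℕ} (A : Matrix (Fin M) (Fin M) ℝ) (x : Fin M → ℝ) :
    vecNormSq (A *ᵥ x) ≤ ‖A‖ ^ 2 * vecNormSq x := by
  rw [vecNormSq_eq_norm_sq, vecNormSq_eq_norm_sq, ← mul_pow]
  gcongr
  exact A.l2_opNorm_mulVec _

lemma frobSq_colMat {M n : ℕ} (v : Fin (n + 1) → Fin M → ℝ) :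
    frobSq (colMat v) = ∑ k, vecNormSq (v k) :=
  Finset.sum_comm

lemma colMat_sub {M n : ℕ} (v w : Fin (n + 1) → Fin M → ℝ) :
    colMat v - colMat w = colMat (v - w) :=
  rfl

lemma sum_fin_succ_eq_sum_Icc {R : Type*} [AddCommMonoid R] {f : ℕ → R} (h0 : f 0 = 0)
    (n : ℕ) : ∑ k : Fin (n + 1), f k = ∑ k ∈ Icc 1 n, f k := by
  rw [Fin.sum_univ_eq_sum_range f, sum_range_succ', h0, add_zero, ← Ico_add_one_right_eq_Icc,
    sum_Ico_eq_sum_range, add_tsub_cancel_right]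
  simp only [add_comm 1]

section NormedRing

variable {R : Type*} [SeminormedRing R]

lemma norm_pow_mul_le_of_norm_le_one {a : R} (ha : ‖a‖ ≤ 1) (b : R) (k : ℕ) :
    ‖a ^ k * b‖ ≤ ‖b‖ := by
  induction k with
  | zero => simp
  | succ k ih =>
    calc ‖a ^ (k + 1) * b‖ = ‖a * (a ^ k * b)‖ := by rw [pow_succ', mul_assoc]
      _ ≤ ‖a‖ * ‖a ^ k * b‖ := norm_mul_le _ _
      _ ≤ 1 * ‖b‖ := by gcongr
      _ = ‖b‖ := one_mul _

lemma norm_pow_sub_pow_le {a b : R} (ha : ‖a‖ ≤ 1) (hb : ‖b‖ ≤ 1) (k : ℕ) :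
    ‖a ^ k - b ^ k‖ ≤ k * ‖a - b‖ := by
  induction k with
  | zero => simp
  | succ k ih =>
    calc ‖a ^ (k + 1) - b ^ (k + 1)‖ = ‖(a ^ k - b ^ k) * a + b ^ k * (a - b)‖ := by
          congr 1; noncomm_ring
      _ ≤ ‖a ^ k - b ^ k‖ * ‖a‖ + ‖a - b‖ :=
          norm_add_le_of_le (norm_mul_le _ _) (norm_pow_mul_le_of_norm_le_one hb _ k)
      _ ≤ k * ‖a - b‖ * 1 + ‖a - b‖ := by gcongr
      _ = (k + 1 : ℕ) * ‖a - b‖ := by push_cast; ring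

lemma norm_mul_mul_sub_mul_mul_le (p x y q : R) :
    ‖p * x * q - p * y * q‖ ≤ ‖p‖ * ‖x - y‖ * ‖q‖ := by
  rw [← sub_mul, ← mul_sub]
  exact norm_mul₃_le

end NormedRing

lemma sub_one_sub_eq_mul_sq {R : Type*} [Ring R] {x b : R} (h : x * (1 + b) = 1) :
    x - (1 - b) = x * b ^ 2 := by
  calc x - (1 - b) = x - x * (1 + b) * (1 - b) := by rw [h, one_mul]
    _ = x * b ^ 2 := by noncomm_ring

section PosSemidef

variable {m : Type*} [Fintype m] [DecidableEq m] {B : Matrix m m ℝ}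

lemma Matrix.PosSemidef.isUnit_det_one_add (hB : B.PosSemidef) : IsUnit (1 + B).det :=
  (PosDef.one.add_posSemidef hB).det_pos.ne'.isUnit

lemma Matrix.PosSemidef.norm_le_norm_add_mulVec (hB : B.PosSemidef) (y : EuclideanSpace ℝ m) :
    ‖y‖ ≤ ‖y + toEuclideanCLM (𝕜 := ℝ) B y‖ := by
  have hnonneg : 0 ≤ inner ℝ y (toEuclideanCLM (𝕜 := ℝ) B y) := by
    rw [inner_toEuclideanCLM]
    simpa using hB.dotProduct_mulVec_nonneg (WithLp.ofLp y)
  refine le_of_sq_le_sq ?_ (norm_nonneg _)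
  rw [norm_add_sq_real]
  nlinarith [sq_nonneg ‖toEuclideanCLM (𝕜 := ℝ) B y‖]

lemma Matrix.PosSemidef.norm_inv_one_add_le_one (hB : B.PosSemidef) : ‖(1 + B)⁻¹‖ ≤ 1 := by
  rw [← l2_opNorm_toEuclideanCLM]
  refine ContinuousLinearMap.opNorm_le_bound _ zero_le_one fun x => ?_
  set y := toEuclideanCLM (𝕜 := ℝ) (1 + B)⁻¹ x
  have hx : x = y + toEuclideanCLM (𝕜 := ℝ) B y := by
    have : toEuclideanCLM (𝕜 := ℝ) ((1 + B) * (1 + B)⁻¹) x = x := by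
      rw [mul_nonsing_inv _ hB.isUnit_det_one_add, map_one, one_apply_eq_self]
    rw [map_mul, mul_apply_eq_comp, map_add, map_one] at this
    exact this.symm
  rw [one_mul]
  conv_rhs => rw [hx]
  exact hB.norm_le_norm_add_mulVec y

lemma Matrix.PosSemidef.norm_inv_one_add_sub_one_sub_le (hB : B.PosSemidef) :
    ‖(1 + B)⁻¹ - (1 - B)‖ ≤ ‖B‖ ^ 2 := by
  rw [sub_one_sub_eq_mul_sq (nonsing_inv_mul _ hB.isUnit_det_one_add)]
  calc ‖(1 + B)⁻¹ * B ^ 2‖ ≤ ‖(1 + B)⁻¹‖ * ‖B ^ 2‖ := norm_mul_le _ _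
    _ ≤ 1 * ‖B‖ ^ 2 := by gcongr; exacts [hB.norm_inv_one_add_le_one, norm_pow_le' B two_pos]
    _ = ‖B‖ ^ 2 := one_mul _

lemma Matrix.PosSemidef.norm_inv_one_add_pow_sub_one_sub_pow_le (hB : B.PosSemidef)
    (h1 : ‖1 - B‖ ≤ 1) (k : ℕ) : ‖(1 + B)⁻¹ ^ k - (1 - B) ^ k‖ ≤ k * ‖B‖ ^ 2 :=
  (norm_pow_sub_pow_le hB.norm_inv_one_add_le_one h1 k).trans <| by
    gcongr; exact hB.norm_inv_one_add_sub_one_sub_le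

end PosSemidef

lemma vecNormSq_conj_pow_sub_conj_pow_le {M : ℕ} {B : Matrix (Fin M) (Fin M) ℝ}
    (hB : B.PosSemidef) (h1 : ‖1 - B‖ ≤ 1) (P Q : Matrix (Fin M) (Fin M) ℝ) (x : Fin M → ℝ)
    (k : ℕ) :
    vecNormSq ((P * (1 + B)⁻¹ ^ k * Q) *ᵥ x - (P * (1 - B) ^ k * Q) *ᵥ x) ≤
      (‖P‖ * (k * ‖B‖ ^ 2) * ‖Q‖) ^ 2 * vecNormSq x := by
  rw [← sub_mulVec]
  refine (vecNormSq_mulVec_le _ _).trans (mul_le_mul_of_nonneg_right ?_ (vecNormSq_nonneg x))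
  gcongr
  refine (norm_mul_mul_sub_mul_mul_le P _ _ Q).trans ?_
  gcongr
  exact hB.norm_inv_one_add_pow_sub_one_sub_pow_le h1 k

theorem frob_bound_Utilde_sub_Ustar_general {M n : ℕ} (Msq A : Matrix (Fin M) (Fin M) ℝ)
    (hA : A.PosSemidef) (τ : ℝ) (hτ : 0 ≤ τ) (h1 : spec (1 - τ • A) ≤ 1)
    (U₀ : Fin M → ℝ) :
    frobSq ((colMat fun k : Fin (n + 1) =>
          (Msq⁻¹ * ((1 + τ • A)⁻¹) ^ (k : ℕ) * Msq).mulVec U₀) -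
        colMat fun k : Fin (n + 1) =>
          (Msq⁻¹ * (1 - τ • A) ^ (k : ℕ) * Msq).mulVec U₀) ≤
      τ ^ 4 * spec A ^ 4 * (∑ k ∈ Finset.Icc 1 n, (k : ℝ) ^ 2) *
        spec Msq⁻¹ ^ 2 * spec Msq ^ 2 * vecNormSq U₀ := by
  have hcol (k : Fin (n + 1)) :=
    vecNormSq_conj_pow_sub_conj_pow_le (hA.smul hτ) h1 Msq⁻¹ Msq U₀ k
  have hnorm : ‖τ • A‖ = τ * ‖A‖ := by rw [norm_smul, Real.norm_of_nonneg hτ]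
  rw [colMat_sub, frobSq_colMat]
  calc _ ≤ ∑ k : Fin (n + 1), (‖Msq⁻¹‖ * (k * ‖τ • A‖ ^ 2) * ‖Msq‖) ^ 2 * vecNormSq U₀ :=
        sum_le_sum fun k _ => hcol k
    _ = (∑ k : Fin (n + 1), ((k : ℕ) : ℝ) ^ 2) *
          (τ ^ 4 * ‖A‖ ^ 4 * ‖Msq⁻¹‖ ^ 2 * ‖Msq‖ ^ 2 * vecNormSq U₀) := by
        rw [sum_mul]
        exact sum_congr rfl fun k _ => by rw [hnorm]; ring
    _ = _ := by
        rw [sum_fin_succ_eq_sum_Icc (f := fun k : ℕ => (k : ℝ) ^ 2) (by simp)]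
        simp only [spec_eq_norm]
        ring

/-- Frobenius bound for the difference `Ũ - U*`, where
`Ũ_k = 𝑴^{-1/2}(I + τ𝒜)^{-k} 𝑴^{1/2} U₀` and `U*_k = 𝑴^{-1/2}(I - τ𝒜)^k 𝑴^{1/2} U₀`:
`‖Ũ - U*‖_F² ≤ τ⁴ ‖𝒜‖₂⁴ (∑_{k=1}^n k²) ‖𝑴^{-1/2}‖₂² ‖𝑴^{1/2}‖₂² ‖U₀‖₂²`. -/
theorem frob_bound_Utilde_sub_Ustar {M n : ℕ} (Mmat Msq A : Matrix (Fin M) (Fin M) ℝ)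
    (hM : Mmat.PosDef) (hMsq : Msq.PosDef) (hsq : Msq * Msq = Mmat)
    (hA : A.PosSemidef) (τ : ℝ) (hτ : 0 ≤ τ) (h1 : spec (1 - τ • A) ≤ 1)
    (U₀ : Fin M → ℝ) :
    frobSq ((colMat fun k : Fin (n + 1) =>
          (Msq⁻¹ * ((1 + τ • A)⁻¹) ^ (k : ℕ) * Msq).mulVec U₀) -
        colMat fun k : Fin (n + 1) =>
          (Msq⁻¹ * (1 - τ • A) ^ (k : ℕ) * Msq).mulVec U₀) ≤
      τ ^ 4 * spec A ^ 4 * (∑ k ∈ Finset.Icc 1 n, (k : ℝ) ^ 2) *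
        spec Msq⁻¹ ^ 2 * spec Msq ^ 2 * vecNormSq U₀ :=
  frob_bound_Utilde_sub_Ustar_general Msq A hA τ hτ h1 U₀
end

section
/- (Lemma 4.3 of the paper) Let 𝑴 be a real symmetric positive definite M×M matrix with unique symmetric positive definite square root 𝑴^{1/2} and 𝑴^{−1/2} = (𝑴^{1/2})^{−1}, let 𝒜 be a real symmetric positive definite M×M matrix, and let U₀, F ∈ ℝ^M. Then there exists a constant C > 0, depending only on 𝑴, 𝒜, U₀ and F (in particular independent of n and τ), such that the following holds: for every integer n ≥ 1 and every τ ∈ (0,1) with max{τ‖𝒜‖₂, ‖I − τ𝒜‖₂} < 1 and nτ ≤ 1, if (U_k) is defined by U_0 = U₀ and U_k = 𝑴^{−1/2}(I + τ𝒜)^{−1}𝑴^{1/2}U_{k−1} + τ𝑴^{−1/2}(I + τ𝒜)^{−1}𝑴^{−1/2}F for k ≥ 1, U is the M×(n+1) matrix with columns U_0, …, U_n, X = UᵀU, and X̄* = Ū*ᵀŪ* where Ū* is the M×(n+1) matrix with columns Ū*_k = (1 − τ‖𝒜‖₂)^k U₀, then ‖X − X̄*‖_F² ≤ C n⁴ τ².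 -/
open Matrix Finset

/-!
Conjugating by `P = 𝑴^{1/2}` turns the iteration into `V_k = (I + τ𝒜)⁻¹ V_{k-1} + g` with
`‖g‖ = O(τ)`. Since `𝒜 ⪰ 0`, `‖(I + τ𝒜)⁻¹‖ ≤ 1` and `‖(I + τ𝒜)⁻¹ - (1 - τ‖𝒜‖) I‖ ≤ 2τ‖𝒜‖`, so
the distance from `V_k` to `(1 - τ‖𝒜‖)^k V_0` grows by `O(τ)` per step and is `O(kτ) = O(nτ)`;
the same holds for `U_k` after multiplying by `𝑴^{-1/2}`. Every entry of `X - X̄*` is a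
difference of inner products of vectors this close to each other, hence `O(nτ)`, and summing the
squares of its `(n + 1)²` entries gives `O(n⁴τ²)`.
-/

open WithLp
open scoped Matrix.Norms.L2Operator RealInnerProductSpace

theorem ContinuousLinearMap.opNorm_le_one_of_rightInverse_of_norm_sq_le_inner {E : Type*}
    [NormedAddCommGroup E] [InnerProductSpace ℝ E] {S T : E →L[ℝ] E}
    (hST : Function.RightInverse S T) (hT : ∀ x, ‖x‖ ^ 2 ≤ ⟪x, T x⟫) : ‖S‖ ≤ 1 := by
  refine opNorm_le_bound _ zero_le_one fun y => ?_
  have h := hT (S y)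
  rw [hST y] at h
  nlinarith [real_inner_le_norm (S y) y, norm_nonneg (S y), norm_nonneg y]

theorem norm_sub_pow_smul_le_of_recursion {𝕜 E : Type*} [NontriviallyNormedField 𝕜]
    [NormedAddCommGroup E] [NormedSpace 𝕜 E] {T : E →L[𝕜] E} {β : 𝕜} {δ : ℝ} {g : E}
    {v : ℕ → E} (hβ : ‖β‖ ≤ 1) (hT : ‖T‖ ≤ 1) (hTβ : ‖T - β • 1‖ ≤ δ)
    (hv : ∀ k, v (k + 1) = T (v k) + g) (k : ℕ) :
    ‖v k - β ^ k • v 0‖ ≤ k * (δ * ‖v 0‖ + ‖g‖) := by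
  induction k with
  | zero => simp
  | succ k ih =>
    have hsplit : v (k + 1) - β ^ (k + 1) • v 0 =
        T (v k - β ^ k • v 0) + β ^ k • (T - β • 1) (v 0) + g := by
      rw [hv, map_sub, map_smul, _root_.sub_apply, _root_.smul_apply, one_apply_eq_self, pow_succ',
        mul_smul]
      module
    have hpow : ‖β ^ k‖ ≤ 1 := by rw [norm_pow]; exact pow_le_one₀ (norm_nonneg _) hβ
    calc ‖v (k + 1) - β ^ (k + 1) • v 0‖
        ≤ ‖T (v k - β ^ k • v 0)‖ + ‖β ^ k‖ * ‖(T - β • 1) (v 0)‖ + ‖g‖ := by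
          rw [hsplit, ← norm_smul]; exact norm_add₃_le
      _ ≤ 1 * (k * (δ * ‖v 0‖ + ‖g‖)) + 1 * (δ * ‖v 0‖) + ‖g‖ := by
          gcongr
          · exact T.le_of_opNorm_le hT _ |>.trans (by gcongr)
          · exact (T - β • 1).le_of_opNorm_le hTβ _
      _ = (k + 1 : ℕ) * (δ * ‖v 0‖ + ‖g‖) := by push_cast; ring

theorem abs_inner_sub_inner_le {E : Type*} [NormedAddCommGroup E] [InnerProductSpace ℝ E]
    {a b a' b' : E} {ε R : ℝ} (ha : ‖a - a'‖ ≤ ε) (hb : ‖b - b'‖ ≤ ε) (ha' : ‖a'‖ ≤ R)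
    (hb' : ‖b'‖ ≤ R) : |⟪a, b⟫ - ⟪a', b'⟫| ≤ ε * (2 * R + ε) := by
  have hb_le : ‖b‖ ≤ R + ε := (norm_le_insert' b b').trans (add_le_add hb' hb)
  have hε : 0 ≤ ε := (norm_nonneg _).trans ha
  calc |⟪a, b⟫ - ⟪a', b'⟫| = |⟪a - a', b⟫ + ⟪a', b - b'⟫| := by
        rw [inner_sub_left, inner_sub_right]; ring_nf
    _ ≤ ‖a - a'‖ * ‖b‖ + ‖a'‖ * ‖b - b'‖ :=
        (abs_add_le _ _).trans
          (add_le_add (abs_real_inner_le_norm _ _) (abs_real_inner_le_norm _ _))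
    _ ≤ ε * (R + ε) + R * ε := by gcongr; exact (norm_nonneg _).trans ha'
    _ = ε * (2 * R + ε) := by ring

namespace Matrix

variable {n : Type*} [DecidableEq n]

theorem PosSemidef.posDef_one_add_smul {A : Matrix n n ℝ} (hA : A.PosSemidef) {τ : ℝ}
    (hτ : 0 ≤ τ) : (1 + τ • A).PosDef :=
  PosDef.one.add_posSemidef (hA.smul hτ)

variable [Fintype n]

theorem PosSemidef.inner_toEuclideanCLM_nonneg {A : Matrix n n ℝ} (hA : A.PosSemidef)
    (x : EuclideanSpace ℝ n) : 0 ≤ ⟪x, toEuclideanCLM (𝕜 := ℝ) A x⟫ := by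
  rw [inner_toEuclideanCLM]
  simpa using hA.dotProduct_mulVec_nonneg x.ofLp

theorem norm_toLp_mulVec_le (B : Matrix n n ℝ) (x : n → ℝ) :
    ‖toLp 2 (B *ᵥ x)‖ ≤ ‖B‖ * ‖toLp 2 x‖ :=
  (toEuclideanCLM (𝕜 := ℝ) B).le_opNorm (toLp 2 x)

theorem PosSemidef.norm_inv_one_add_smul_le_one {A : Matrix n n ℝ} (hA : A.PosSemidef) {τ : ℝ}
    (hτ : 0 ≤ τ) : ‖(1 + τ • A)⁻¹‖ ≤ 1 := by
  have hJ : IsUnit (1 + τ • A).det := (hA.posDef_one_add_smul hτ).isUnit.map detMonoidHom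
  rw [← l2_opNorm_toEuclideanCLM]
  refine ContinuousLinearMap.opNorm_le_one_of_rightInverse_of_norm_sq_le_inner
    (T := toEuclideanCLM (𝕜 := ℝ) (1 + τ • A)) (fun y => ?_) (fun x => ?_)
  · rw [← mul_apply_eq_comp, ← map_mul, mul_nonsing_inv _ hJ, map_one, one_apply_eq_self]
  · rw [map_add, map_one, map_smul, _root_.add_apply, one_apply_eq_self, _root_.smul_apply,
      inner_add_right, inner_smul_right, real_inner_self_eq_norm_sq]
    nlinarith [hA.inner_toEuclideanCLM_nonneg x]

theorem PosSemidef.norm_inv_one_add_smul_sub_le {A : Matrix n n ℝ} (hA : A.PosSemidef) {τ : ℝ}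
    (hτ : 0 ≤ τ) (hτA : τ * ‖A‖ ≤ 1) :
    ‖(1 + τ • A)⁻¹ - (1 - τ * ‖A‖) • 1‖ ≤ 2 * τ * ‖A‖ := by
  set β := 1 - τ * ‖A‖
  have hβ1 : β ≤ 1 := by have := mul_nonneg hτ (norm_nonneg A); linarith
  have hJ : IsUnit (1 + τ • A).det := (hA.posDef_one_add_smul hτ).isUnit.map detMonoidHom
  have hJinv := hA.norm_inv_one_add_smul_le_one hτ
  have factor : (1 + τ • A)⁻¹ - β • 1 =
      (τ * ‖A‖) • (1 + τ • A)⁻¹ - (β * τ) • ((1 + τ • A)⁻¹ * A) := by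
    have : (1 + τ • A)⁻¹ * (1 + τ • A) = 1 := nonsing_inv_mul _ hJ
    rw [Matrix.mul_add, Matrix.mul_one, Matrix.mul_smul] at this
    calc (1 + τ • A)⁻¹ - β • 1
        = (1 + τ • A)⁻¹ - β • ((1 + τ • A)⁻¹ + τ • ((1 + τ • A)⁻¹ * A)) := by rw [this]
      _ = _ := by simp only [β]; module
  calc ‖(1 + τ • A)⁻¹ - β • 1‖
      ≤ τ * ‖A‖ * ‖(1 + τ • A)⁻¹‖ + β * τ * (‖(1 + τ • A)⁻¹‖ * ‖A‖) := by
        rw [factor]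
        refine (norm_sub_le _ _).trans (add_le_add ?_ ?_) <;>
          rw [norm_smul, Real.norm_of_nonneg (by positivity)]
        exact mul_le_mul_of_nonneg_left (norm_mul_le _ _) (by positivity)
    _ ≤ τ * ‖A‖ * 1 + 1 * τ * (1 * ‖A‖) := by gcongr
    _ = 2 * τ * ‖A‖ := by ring

theorem PosSemidef.norm_backwardEuler_sub_pow_smul_le {P A : Matrix n n ℝ} (hP : IsUnit P.det)
    (hA : A.PosSemidef) {τ : ℝ} (hτ : 0 ≤ τ) (hτA : τ * ‖A‖ ≤ 1) {F : n → ℝ} {U : ℕ → n → ℝ}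
    (hU : ∀ k, U (k + 1) = (P⁻¹ * (1 + τ • A)⁻¹ * P) *ᵥ U k +
      τ • (P⁻¹ * (1 + τ • A)⁻¹ * P⁻¹) *ᵥ F) (k : ℕ) :
    ‖toLp 2 (U k - (1 - τ * ‖A‖) ^ k • U 0)‖ ≤
      k * τ * (‖P⁻¹‖ * (2 * ‖A‖ * ‖toLp 2 (P *ᵥ U 0)‖ + ‖P⁻¹‖ * ‖toLp 2 F‖)) := by
  set β := 1 - τ * ‖A‖
  have hβ : ‖β‖ ≤ 1 := by
    rw [Real.norm_eq_abs, abs_le]; constructor <;> nlinarith [norm_nonneg A]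
  set v : ℕ → EuclideanSpace ℝ n := fun k => toLp 2 (P *ᵥ U k)
  set g : EuclideanSpace ℝ n := toLp 2 (τ • ((1 + τ • A)⁻¹ * P⁻¹) *ᵥ F)
  have hv : ∀ k, v (k + 1) = toEuclideanCLM (𝕜 := ℝ) (1 + τ • A)⁻¹ (v k) + g := fun k => by
    simp only [v, g, hU, toEuclideanCLM_toLp, ← WithLp.toLp_add, mulVec_add, mulVec_smul,
      mulVec_mulVec, ← Matrix.mul_assoc, mul_nonsing_inv _ hP, Matrix.one_mul]
  have hTβ : ‖toEuclideanCLM (𝕜 := ℝ) (1 + τ • A)⁻¹ - β • 1‖ ≤ 2 * τ * ‖A‖ := by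
    rw [← map_one (toEuclideanCLM (𝕜 := ℝ) (n := n)), ← map_smul, ← map_sub]
    exact hA.norm_inv_one_add_smul_sub_le hτ hτA
  have hg : ‖g‖ ≤ τ * (‖P⁻¹‖ * ‖toLp 2 F‖) := by
    calc ‖g‖ = τ * ‖toLp 2 ((1 + τ • A)⁻¹ *ᵥ P⁻¹ *ᵥ F)‖ := by
          simp only [g]
          rw [WithLp.toLp_smul, norm_smul, Real.norm_of_nonneg hτ, ← mulVec_mulVec]
      _ ≤ τ * (1 * (‖P⁻¹‖ * ‖toLp 2 F‖)) := by
          gcongr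
          exact (norm_toLp_mulVec_le _ _).trans
            (mul_le_mul (hA.norm_inv_one_add_smul_le_one hτ) (norm_toLp_mulVec_le _ _)
              (norm_nonneg _) zero_le_one)
      _ = τ * (‖P⁻¹‖ * ‖toLp 2 F‖) := by ring
  have hW := norm_sub_pow_smul_le_of_recursion hβ (hA.norm_inv_one_add_smul_le_one hτ) hTβ hv k
  have hUv : U k - β ^ k • U 0 = P⁻¹ *ᵥ ofLp (v k - β ^ k • v 0) := by
    simp only [v, WithLp.ofLp_sub, WithLp.ofLp_smul, mulVec_sub, mulVec_smul, mulVec_mulVec,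
      nonsing_inv_mul _ hP, one_mulVec]
  calc ‖toLp 2 (U k - β ^ k • U 0)‖
      ≤ ‖P⁻¹‖ * ‖v k - β ^ k • v 0‖ := by
        rw [hUv]; exact norm_toLp_mulVec_le _ _
    _ ≤ ‖P⁻¹‖ * (k * (2 * τ * ‖A‖ * ‖v 0‖ + τ * (‖P⁻¹‖ * ‖toLp 2 F‖))) := by
        gcongr; exact hW.trans (by gcongr)
    _ = _ := by ring

end Matrix

theorem frobSq_le_of_abs_le {m l : ℕ} {A : Matrix (Fin m) (Fin l) ℝ} {c : ℝ}
    (h : ∀ i j, |A i j| ≤ c) : frobSq A ≤ m * l * c ^ 2 := by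
  calc frobSq A ≤ ∑ _i : Fin m, ∑ _j : Fin l, c ^ 2 := by
        refine sum_le_sum fun i _ => sum_le_sum fun j _ => ?_
        exact sq_le_sq' (abs_le.mp (h i j)).1 (abs_le.mp (h i j)).2
    _ = m * l * c ^ 2 := by simp [mul_assoc]

theorem colMat_transpose_mul_colMat_apply {M n : ℕ} (v w : Fin (n + 1) → Fin M → ℝ)
    (j k : Fin (n + 1)) : ((colMat v)ᵀ * colMat w) j k = v j ⬝ᵥ w k := by
  simp [colMat, Matrix.mul_apply, dotProduct]

theorem frobSq_gram_sub_le {M n : ℕ} {v w : Fin (n + 1) → Fin M → ℝ} {ε R : ℝ}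
    (hvw : ∀ k, ‖toLp 2 (v k - w k)‖ ≤ ε) (hw : ∀ k, ‖toLp 2 (w k)‖ ≤ R) :
    frobSq ((colMat v)ᵀ * colMat v - (colMat w)ᵀ * colMat w) ≤
      (n + 1) ^ 2 * (ε * (2 * R + ε)) ^ 2 := by
  have hentry : ∀ j k, |((colMat v)ᵀ * colMat v - (colMat w)ᵀ * colMat w) j k| ≤
      ε * (2 * R + ε) := fun j k => by
    rw [Matrix.sub_apply, colMat_transpose_mul_colMat_apply, colMat_transpose_mul_colMat_apply,
      dotProduct_comm (v j), dotProduct_comm (w j)]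
    exact abs_inner_sub_inner_le (a := toLp 2 (v j)) (b := toLp 2 (v k))
      (hvw j) (hvw k) (hw j) (hw k)
  simpa [sq] using frobSq_le_of_abs_le hentry

theorem lemma_4_3_general {M : ℕ} (Msq A : Matrix (Fin M) (Fin M) ℝ)
    (hMsq : Msq.PosDef) (hA : A.PosDef) (U₀ F : Fin M → ℝ) :
    ∃ C > 0, ∀ n : ℕ, 1 ≤ n → ∀ τ : ℝ, 0 < τ → τ < 1 →
      τ * spec A < 1 → spec (1 - τ • A) < 1 → (n : ℝ) * τ ≤ 1 →
      ∀ U : ℕ → Fin M → ℝ, U 0 = U₀ →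
        (∀ k : ℕ, 1 ≤ k → U k = (Msq⁻¹ * (1 + τ • A)⁻¹ * Msq).mulVec (U (k - 1)) +
          τ • (Msq⁻¹ * (1 + τ • A)⁻¹ * Msq⁻¹).mulVec F) →
        frobSq ((colMat fun k : Fin (n + 1) => U (k : ℕ))ᵀ *
            (colMat fun k : Fin (n + 1) => U (k : ℕ)) -
            (colMat fun k : Fin (n + 1) => (1 - τ * spec A) ^ (k : ℕ) • U₀)ᵀ *
            (colMat fun k : Fin (n + 1) => (1 - τ * spec A) ^ (k : ℕ) • U₀)) ≤
          C * (n : ℝ) ^ 4 * τ ^ 2 := by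
  set D := ‖Msq⁻¹‖ * (2 * ‖A‖ * ‖toLp 2 (Msq *ᵥ U₀)‖ + ‖Msq⁻¹‖ * ‖toLp 2 F‖)
  set R := ‖toLp 2 U₀‖
  have hD : 0 ≤ D := by positivity
  refine ⟨4 * (D * (2 * R + D)) ^ 2 + 1, by positivity, ?_⟩
  intro n hn τ hτ _ hτA _ hnτ U hU0 hU
  -- `spec` is definitionally the operator norm of `Matrix.Norms.L2Operator`
  change τ * ‖A‖ < 1 at hτA
  change frobSq (_ - (colMat fun k : Fin (n + 1) => (1 - τ * ‖A‖) ^ (k : ℕ) • U₀)ᵀ * _) ≤ _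
  have hβ : |1 - τ * ‖A‖| ≤ 1 := by
    rw [abs_le]; constructor <;> nlinarith [norm_nonneg A]
  have hdiff (k : Fin (n + 1)) : ‖toLp 2 (U k - (1 - τ * ‖A‖) ^ (k : ℕ) • U₀)‖ ≤ n * τ * D := by
    subst hU0
    refine (hA.posSemidef.norm_backwardEuler_sub_pow_smul_le (hMsq.isUnit.map detMonoidHom) hτ.le
      hτA.le (fun k => by simpa using hU (k + 1) (by omega)) k).trans ?_
    gcongr; exact_mod_cast k.is_le
  have hpow (k : Fin (n + 1)) : ‖toLp 2 ((1 - τ * ‖A‖) ^ (k : ℕ) • U₀)‖ ≤ R := by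
    rw [WithLp.toLp_smul, norm_smul, norm_pow, Real.norm_eq_abs]
    exact mul_le_of_le_one_left (norm_nonneg _) (pow_le_one₀ (abs_nonneg _) hβ)
  have hn1 : (1 : ℝ) ≤ n := by exact_mod_cast hn
  calc _ ≤ (n + 1) ^ 2 * (n * τ * D * (2 * R + n * τ * D)) ^ 2 := frobSq_gram_sub_le hdiff hpow
    _ ≤ (2 * n) ^ 2 * (n * τ * (D * (2 * R + D))) ^ 2 := by
        have : n * τ * D ≤ D := mul_le_of_le_one_left hD hnτ
        gcongr ?_ ^ 2 * ?_ ^ 2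
        · linarith
        · rw [mul_assoc (n * τ)]; gcongr
    _ ≤ _ := by nlinarith [sq_nonneg ((n : ℝ) ^ 2 * τ)]

/-- **Lemma 4.3.** There is a constant `C > 0`, independent of `n` and `τ`, such that
for all `n ≥ 1` and `τ ∈ (0,1)` with `max{τ‖𝒜‖₂, ‖I - τ𝒜‖₂} < 1` and `nτ ≤ 1`,
`‖X - X̄*‖_F² ≤ C n⁴ τ²`, where `X = UᵀU` for the backward Euler iterates `U_k`
with source term `F`, and `X̄* = Ū*ᵀŪ*` with `Ū*_k = (1 - τ‖𝒜‖₂)^k U₀`. -/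
theorem lemma_4_3 {M : ℕ} (Mmat Msq A : Matrix (Fin M) (Fin M) ℝ)
    (hM : Mmat.PosDef) (hMsq : Msq.PosDef) (hsq : Msq * Msq = Mmat)
    (hA : A.PosDef) (U₀ F : Fin M → ℝ) :
    ∃ C > 0, ∀ n : ℕ, 1 ≤ n → ∀ τ : ℝ, 0 < τ → τ < 1 →
      τ * spec A < 1 → spec (1 - τ • A) < 1 → (n : ℝ) * τ ≤ 1 →
      ∀ U : ℕ → Fin M → ℝ, U 0 = U₀ →
        (∀ k : ℕ, 1 ≤ k → U k = (Msq⁻¹ * (1 + τ • A)⁻¹ * Msq).mulVec (U (k - 1)) +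
          τ • (Msq⁻¹ * (1 + τ • A)⁻¹ * Msq⁻¹).mulVec F) →
        frobSq ((colMat fun k : Fin (n + 1) => U (k : ℕ))ᵀ *
            (colMat fun k : Fin (n + 1) => U (k : ℕ)) -
            (colMat fun k : Fin (n + 1) => (1 - τ * spec A) ^ (k : ℕ) • U₀)ᵀ *
            (colMat fun k : Fin (n + 1) => (1 - τ * spec A) ^ (k : ℕ) • U₀)) ≤
          C * (n : ℝ) ^ 4 * τ ^ 2 :=
  lemma_4_3_general Msq A hMsq hA U₀ F
end

section
/- (Theorem 4.4 of the paper) Let 𝑴 be a real symmetric positive definite M×M matrix with unique symmetric positive definite square root 𝑴^{1/2} and 𝑴^{−1/2} = (𝑴^{1/2})^{−1}, let 𝒜 be a real symmetric positive definite M×M matrix, and let U₀, F ∈ ℝ^M. Then there exists a constant C > 0, depending only on 𝑴, 𝒜, U₀ and F (in particular independent of n and τ), such that the following holds for every integer n ≥ 1 and every τ ∈ (0,1) with max{τ‖𝒜‖₂, ‖I − τ𝒜‖₂} < 1 and nτ ≤ 1: let (U_k) be defined by U_0 = U₀ and U_k = 𝑴^{−1/2}(I + τ𝒜)^{−1}𝑴^{1/2}U_{k−1}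 + τ𝑴^{−1/2}(I + τ𝒜)^{−1}𝑴^{−1/2}F, let U be the M×(n+1) matrix with columns U_0, …, U_n, let X = UᵀU with eigenvalues λ_0(X) ≥ λ_1(X) ≥ ⋯ ≥ λ_n(X) in decreasing order, and let X̄* = Ū*ᵀŪ* where Ū* has columns Ū*_k = (1 − τ‖𝒜‖₂)^k U₀, with largest eigenvalue λ_0(X̄*). Then (λ_0(X) − λ_0(X̄*))² + Σ_{k=1}^{n} λ_k(X)² ≤ C n⁴ τ². -/
open Matrix Finset

/-!
In the variables `V_k = 𝑴^{1/2} U_k` the scheme reads `V_k = T V_{k-1} + τ T 𝑴^{-1/2} F` with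
`T = (I + τ𝒜)⁻¹`, which is a contraction within `2τ‖𝒜‖₂` of multiplication by
`r = 1 - τ‖𝒜‖₂`. Hence `‖U_k - r^k U₀‖ = O(kτ)`: each column of `U` lies within `O(nτ)` of the
column `c_k U₀`, `c_k = r^k`, of `Ū*`. With `s = ∑ c_k²`, the rank-one Gram matrix `X̄*` has
`λ₀(X̄*) = s‖U₀‖²`, while for `X = UᵀU` the Rayleigh quotient at `c` gives
`λ₀(X) ≥ ‖U c‖² / s ≥ s‖U₀‖² - O(n²τ)` and `∑ λ_k(X) = ∑ ‖U_k‖² ≤ s‖U₀‖² + O(n²τ)`.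
So `λ₀(X)`, `λ₀(X̄*)` and `tr X` lie in an interval of length `O(n²τ)`, which bounds both
`|λ₀(X) - λ₀(X̄*)|` and `∑_{k ≥ 1} λ_k(X)`, hence `∑_{k ≥ 1} λ_k(X)²`.
-/

open WithLp

section Resolvent

variable {E : Type*} [NormedAddCommGroup E] [InnerProductSpace ℝ E] {P : E →L[ℝ] E}
  {T : E →ₗ[ℝ] E} {τ : ℝ}

theorem norm_le_norm_add_smul_of_isPositive (hP : P.IsPositive) (hτ : 0 ≤ τ) (y : E) :
    ‖y‖ ≤ ‖y + τ • P y‖ := by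
  have hinner : ‖y‖ ^ 2 ≤ inner ℝ y (y + τ • P y) := by
    rw [inner_add_right, real_inner_self_eq_norm_sq, inner_smul_right]
    have := hP.inner_nonneg_right y
    nlinarith
  rcases (norm_nonneg y).eq_or_lt with hy | hy
  · rw [← hy]; exact norm_nonneg _
  · nlinarith [real_inner_le_norm y (y + τ • P y)]

theorem norm_resolvent_apply_le (hP : P.IsPositive) (hτ : 0 ≤ τ)
    (hT : ∀ z, T z + τ • P (T z) = z) (z : E) : ‖T z‖ ≤ ‖z‖ := by
  simpa only [hT] using norm_le_norm_add_smul_of_isPositive hP hτ (T z)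

theorem norm_resolvent_apply_sub_smul_le (hP : P.IsPositive) (hτ : 0 ≤ τ) (hτP : τ * ‖P‖ ≤ 1)
    (hT : ∀ z, T z + τ • P (T z) = z) (hT' : ∀ y, T (y + τ • P y) = y) (w : E) :
    ‖T w - (1 - τ * ‖P‖) • w‖ ≤ 2 * τ * ‖P‖ * ‖w‖ := by
  set r := 1 - τ * ‖P‖
  have hr : |r| ≤ 1 := abs_le.mpr ⟨by linarith, by linarith [mul_nonneg hτ (norm_nonneg P)]⟩
  have hsplit : T w - r • w = T ((τ * ‖P‖) • w - (τ * r) • P w) := by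
    conv_lhs => rw [← hT' (r • w)]
    rw [map_smul, ← map_sub, ← smul_assoc, smul_eq_mul]
    congr 1
    simp only [r, sub_smul, one_smul]
    abel
  calc ‖T w - r • w‖ ≤ ‖(τ * ‖P‖) • w - (τ * r) • P w‖ := by
        rw [hsplit]; exact norm_resolvent_apply_le hP hτ hT _
    _ ≤ τ * ‖P‖ * ‖w‖ + |r| * τ * (‖P‖ * ‖w‖) := by
        refine (norm_sub_le _ _).trans ?_
        rw [norm_smul, norm_smul, Real.norm_of_nonneg (by positivity), Real.norm_eq_abs, abs_mul,
          abs_of_nonneg hτ, mul_comm |r|]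
        gcongr
        exact P.le_opNorm w
    _ ≤ 2 * τ * ‖P‖ * ‖w‖ := by
        have := mul_nonneg (mul_nonneg hτ (norm_nonneg P)) (norm_nonneg w)
        nlinarith

end Resolvent

section Iteration

variable {E : Type*} [NormedAddCommGroup E] [NormedSpace ℝ E]

theorem norm_iterate_sub_pow_smul_le (T : E →ₗ[ℝ] E) (hT : ∀ z, ‖T z‖ ≤ ‖z‖) {r ε : ℝ}
    (hr : |r| ≤ 1) (hε : 0 ≤ ε) (hTr : ∀ w, ‖T w - r • w‖ ≤ ε * ‖w‖) {g : E} {V : ℕ → E}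
    (hV : ∀ k, V (k + 1) = T (V k) + g) (k : ℕ) :
    ‖V k - r ^ k • V 0‖ ≤ k * (ε * ‖V 0‖ + ‖g‖) := by
  induction k with
  | zero => simp
  | succ k ih =>
    have hsplit : V (k + 1) - r ^ (k + 1) • V 0
        = T (V k - r ^ k • V 0) + (T (r ^ k • V 0) - r • r ^ k • V 0) + g := by
      rw [hV, map_sub, smul_smul, ← pow_succ']; abel
    have hpow : ‖r ^ k • V 0‖ ≤ ‖V 0‖ := by
      rw [norm_smul, norm_pow, Real.norm_eq_abs]
      exact mul_le_of_le_one_left (norm_nonneg _) (pow_le_one₀ (abs_nonneg r) hr)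
    calc ‖V (k + 1) - r ^ (k + 1) • V 0‖
        ≤ ‖V k - r ^ k • V 0‖ + ε * ‖V 0‖ + ‖g‖ := by
          rw [hsplit]
          refine (norm_add₃_le).trans ?_
          gcongr
          · exact hT _
          · exact (hTr _).trans (by gcongr)
      _ ≤ (k + 1 : ℕ) * (ε * ‖V 0‖ + ‖g‖) := by push_cast; linarith

end Iteration

theorem norm_toEuclideanLin_le_spec {M : ℕ} (A : Matrix (Fin M) (Fin M) ℝ)
    (x : EuclideanSpace ℝ (Fin M)) : ‖toEuclideanLin A x‖ ≤ spec A * ‖x‖ :=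
  (LinearMap.toContinuousLinearMap (toEuclideanLin A)).le_opNorm x

theorem toEuclideanLin_inv_one_add_smul {ι : Type*} [Fintype ι] [DecidableEq ι]
    {A : Matrix ι ι ℝ} {τ : ℝ} (hB : IsUnit (1 + τ • A).det) :
    (∀ z, toEuclideanLin (1 + τ • A)⁻¹ z +
        τ • toEuclideanLin A (toEuclideanLin (1 + τ • A)⁻¹ z) = z) ∧
      ∀ y, toEuclideanLin (1 + τ • A)⁻¹ (y + τ • toEuclideanLin A y) = y := by
  have hBA : ∀ y, y + τ • toEuclideanLin A y = toEuclideanLin (1 + τ • A) y := fun y => by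
    ext i; simp
  refine ⟨fun z => ?_, fun y => ?_⟩ <;> rw [hBA, toLpLin_apply, toLpLin_apply, ofLp_toLp,
    mulVec_mulVec]
  · rw [mul_nonsing_inv _ hB, one_mulVec]
  · rw [nonsing_inv_mul _ hB, one_mulVec]

theorem mulVec_eq_of_eq_conj_mulVec {ι : Type*} [Fintype ι] [DecidableEq ι]
    {S B : Matrix ι ι ℝ} (hS : IsUnit S.det) {u v f : ι → ℝ} {τ : ℝ}
    (h : v = (S⁻¹ * B * S) *ᵥ u + τ • (S⁻¹ * B * S⁻¹) *ᵥ f) :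
    S *ᵥ v = B *ᵥ S *ᵥ u + B *ᵥ τ • S⁻¹ *ᵥ f := by
  rw [h, mulVec_add, mulVec_smul, mulVec_mulVec, mulVec_mulVec, Matrix.mul_assoc S⁻¹,
    Matrix.mul_assoc S⁻¹, mul_nonsing_inv_cancel_left _ _ hS, mul_nonsing_inv_cancel_left _ _ hS,
    ← mulVec_mulVec, ← mulVec_mulVec, mulVec_smul]

theorem exists_norm_backwardEuler_sub_le {M : ℕ} (S A : Matrix (Fin M) (Fin M) ℝ)
    (hS : IsUnit S.det) (hA : A.PosSemidef) (U₀ F : Fin M → ℝ) :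
    ∃ K ≥ 0, ∀ τ : ℝ, 0 ≤ τ → τ * spec A ≤ 1 → ∀ U : ℕ → Fin M → ℝ, U 0 = U₀ →
      (∀ k : ℕ, 1 ≤ k → U k = (S⁻¹ * (1 + τ • A)⁻¹ * S) *ᵥ U (k - 1) +
        τ • (S⁻¹ * (1 + τ • A)⁻¹ * S⁻¹) *ᵥ F) →
      ∀ k : ℕ, ‖toLp 2 (U k) - (1 - τ * spec A) ^ k • toLp 2 U₀‖ ≤ K * (k * τ) := by
  have hSinv : 0 ≤ spec S⁻¹ := norm_nonneg _
  have hAnorm : 0 ≤ spec A := norm_nonneg _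
  refine ⟨spec S⁻¹ * (2 * spec A * ‖toLp 2 (S *ᵥ U₀)‖ + ‖toLp 2 (S⁻¹ *ᵥ F)‖), by positivity, ?_⟩
  intro τ hτ hτA U hU0 hU k
  have hB : IsUnit (1 + τ • A).det :=
    (isUnit_iff_isUnit_det _).mp (PosDef.one.add_posSemidef (hA.smul hτ)).isUnit
  have hP : (LinearMap.toContinuousLinearMap (toEuclideanLin A)).IsPositive :=
    (LinearMap.isPositive_toContinuousLinearMap_iff _).mpr (isPositive_toEuclideanLin_iff.mpr hA)
  obtain ⟨hT, hT'⟩ := toEuclideanLin_inv_one_add_smul hB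
  set T := toEuclideanLin (1 + τ • A)⁻¹
  set V : ℕ → EuclideanSpace ℝ (Fin M) := fun k => toLp 2 (S *ᵥ U k)
  set G := toLp 2 (S⁻¹ *ᵥ F)
  have hV : ∀ k, V (k + 1) = T (V k) + T (τ • G) := fun k => by
    have := mulVec_eq_of_eq_conj_mulVec hS (hU (k + 1) k.succ_pos)
    simp only [V, G, T, toLpLin_apply, this, Nat.add_sub_cancel, toLp_add, ofLp_smul]
  have hr : |1 - τ * spec A| ≤ 1 := abs_le.mpr ⟨by nlinarith, by nlinarith⟩
  have hVk := norm_iterate_sub_pow_smul_le T (norm_resolvent_apply_le hP hτ hT) hr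
    (by positivity) (norm_resolvent_apply_sub_smul_le hP hτ hτA hT hT') hV k
  have hG : ‖T (τ • G)‖ ≤ τ * ‖G‖ := by
    simpa [norm_smul, abs_of_nonneg hτ] using norm_resolvent_apply_le hP hτ hT (τ • G)
  calc ‖toLp 2 (U k) - (1 - τ * spec A) ^ k • toLp 2 U₀‖
        = ‖toEuclideanLin S⁻¹ (V k - (1 - τ * spec A) ^ k • V 0)‖ := by
        congr 1; ext i; simp [V, hU0, mulVec_mulVec, nonsing_inv_mul S hS]
    _ ≤ spec S⁻¹ * (k * (2 * τ * spec A * ‖V 0‖ + τ * ‖G‖)) := by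
        refine (norm_toEuclideanLin_le_spec _ _).trans ?_
        gcongr
        exact hVk.trans (by gcongr; exact le_rfl)
    _ = _ := by simp only [V, hU0]; ring

section RankOnePerturbation

variable {E : Type*} [NormedAddCommGroup E] [InnerProductSpace ℝ E] {ι : Type*} [Fintype ι]
  {x : ι → E} {c : ι → ℝ} {w : E} {δ : ℝ}

theorem norm_sq_sub_two_mul_le_norm_add_sq (a d : E) : ‖a‖ ^ 2 - 2 * ‖a‖ * ‖d‖ ≤ ‖a + d‖ ^ 2 := by
  rw [norm_add_sq_real]
  nlinarith [neg_le_of_abs_le (abs_real_inner_le_norm a d), sq_nonneg ‖d‖]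

theorem le_norm_sum_smul_sq (hc : ∀ k, |c k| ≤ 1) (hx : ∀ k, ‖x k - c k • w‖ ≤ δ) :
    (∑ k, c k ^ 2) ^ 2 * ‖w‖ ^ 2 - 2 * (∑ k, c k ^ 2) * ‖w‖ * (Fintype.card ι * δ) ≤
      ‖∑ k, c k • x k‖ ^ 2 := by
  set s := ∑ k, c k ^ 2
  have hsplit : ∑ k, c k • x k = s • w + ∑ k, c k • (x k - c k • w) := by
    simp only [s, smul_sub, Finset.sum_sub_distrib, smul_smul, ← sq, Finset.sum_smul]
    abel
  have hD : ‖∑ k, c k • (x k - c k • w)‖ ≤ Fintype.card ι * δ := by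
    refine (norm_sum_le _ _).trans ?_
    rw [← nsmul_eq_mul, ← Finset.card_univ]
    refine Finset.sum_le_card_nsmul _ _ _ fun k _ => ?_
    rw [norm_smul, Real.norm_eq_abs]
    exact (mul_le_of_le_one_left (norm_nonneg _) (hc k)).trans (hx k)
  have hs : ‖s • w‖ = s * ‖w‖ := by
    rw [norm_smul, Real.norm_of_nonneg (by positivity)]
  rw [hsplit]
  refine le_trans ?_ (norm_sq_sub_two_mul_le_norm_add_sq _ _)
  rw [hs]
  have : 0 ≤ s * ‖w‖ := by positivity
  nlinarith

theorem sum_norm_sq_le (hc : ∀ k, |c k| ≤ 1) (hx : ∀ k, ‖x k - c k • w‖ ≤ δ) :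
    ∑ k, ‖x k‖ ^ 2 ≤ (∑ k, c k ^ 2) * ‖w‖ ^ 2 + Fintype.card ι * ((2 * ‖w‖ + δ) * δ) := by
  rw [Finset.sum_mul, ← nsmul_eq_mul, ← Finset.card_univ, ← Finset.sum_const,
    ← Finset.sum_add_distrib]
  refine Finset.sum_le_sum fun k _ => ?_
  have hcw : |c k| * ‖w‖ ≤ ‖w‖ := mul_le_of_le_one_left (norm_nonneg _) (hc k)
  calc ‖x k‖ ^ 2 = ‖c k • w + (x k - c k • w)‖ ^ 2 := by rw [add_sub_cancel]
    _ ≤ (|c k| * ‖w‖ + ‖x k - c k • w‖) ^ 2 := by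
      gcongr
      exact (norm_add_le _ _).trans_eq (by rw [norm_smul, Real.norm_eq_abs])
    _ ≤ c k ^ 2 * ‖w‖ ^ 2 + (2 * ‖w‖ + δ) * δ := by
      have hd := hx k
      have hd0 := norm_nonneg (x k - c k • w)
      nlinarith [mul_le_mul hcw hd hd0 (norm_nonneg w), sq_abs (c k)]

end RankOnePerturbation

open scoped MatrixOrder ComplexOrder in
theorem Matrix.IsHermitian.star_dotProduct_mulVec_le {𝕜 : Type*} [RCLike 𝕜] {ι : Type*}
    [Fintype ι] [DecidableEq ι] {X : Matrix ι ι 𝕜} (hX : X.IsHermitian) {t : ℝ}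
    (ht : ∀ i, hX.eigenvalues i ≤ t) (c : ι → 𝕜) :
    star c ⬝ᵥ X *ᵥ c ≤ t * (star c ⬝ᵥ c) := by
  have hle : X ≤ algebraMap ℝ _ t := by
    refine le_algebraMap_of_spectrum_le ?_
    rw [hX.spectrum_real_eq_range_eigenvalues]
    rintro _ ⟨i, rfl⟩
    exact ht i
  have := (Matrix.le_iff.mp hle).dotProduct_mulVec_nonneg c
  rw [sub_mulVec, dotProduct_sub, sub_nonneg] at this
  simpa [Algebra.algebraMap_eq_smul_one, smul_mulVec, Matrix.one_mulVec, dotProduct_smul] using this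

theorem Matrix.IsHermitian.eigenvalues_le_of_antitone {ι : Type*} [Fintype ι] [DecidableEq ι]
    [Preorder ι] [OrderBot ι] {X : Matrix ι ι ℝ} (hX : X.IsHermitian) {σ : Equiv.Perm ι}
    (hσ : Antitone (hX.eigenvalues ∘ σ)) (i : ι) : hX.eigenvalues i ≤ hX.eigenvalues (σ ⊥) := by
  simpa using hσ (bot_le (a := σ.symm i))

section Gram

variable {E : Type*} [NormedAddCommGroup E] [InnerProductSpace ℝ E]

theorem sum_eigenvalues_gram {ι : Type*} [Fintype ι] [DecidableEq ι] {X : Matrix ι ι ℝ}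
    (hX : X.IsHermitian) {x : ι → E} (hXx : X = gram ℝ x) (σ : Equiv.Perm ι) :
    ∑ k, hX.eigenvalues (σ k) = ∑ k, ‖x k‖ ^ 2 := by
  rw [Equiv.sum_comp σ hX.eigenvalues]
  have := hX.trace_eq_sum_eigenvalues
  simp only [RCLike.ofReal_real_eq_id, id] at this
  rw [← this, hXx]
  simp [trace, gram_apply]

theorem norm_sum_smul_sq_le_of_gram {ι : Type*} [Fintype ι] [DecidableEq ι] {X : Matrix ι ι ℝ}
    (hX : X.IsHermitian) {x : ι → E} (hXx : X = gram ℝ x) {t : ℝ}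
    (ht : ∀ i, hX.eigenvalues i ≤ t) (c : ι → ℝ) :
    ‖∑ k, c k • x k‖ ^ 2 ≤ t * ∑ k, c k ^ 2 := by
  have := hX.star_dotProduct_mulVec_le ht c
  subst hXx
  rw [star_dotProduct_gram_mulVec, real_inner_self_eq_norm_sq] at this
  simpa [dotProduct, sq] using this

theorem eigenvalues_nonneg_of_eq_gram {ι : Type*} [Fintype ι] [DecidableEq ι]
    {X : Matrix ι ι ℝ} (hX : X.IsHermitian) {x : ι → E} (hXx : X = gram ℝ x) (i : ι) :
    0 ≤ hX.eigenvalues i := by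
  subst hXx
  exact (posSemidef_gram ℝ x).eigenvalues_nonneg i

theorem gram_eigenvalues_bounds {n : ℕ} {X : Matrix (Fin (n + 1)) (Fin (n + 1)) ℝ}
    (hX : X.IsHermitian) {x : Fin (n + 1) → E} (hXx : X = gram ℝ x) {σ : Equiv.Perm (Fin (n + 1))}
    (hσ : Antitone (hX.eigenvalues ∘ σ)) {c : Fin (n + 1) → ℝ} (hc : ∀ k, |c k| ≤ 1)
    (hc0 : c 0 = 1) {w : E} {δ : ℝ} (hx : ∀ k, ‖x k - c k • w‖ ≤ δ) :
    (∑ k, c k ^ 2) * ‖w‖ ^ 2 - 2 * ‖w‖ * ((n + 1) * δ) ≤ hX.eigenvalues (σ 0) ∧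
      ∑ k, hX.eigenvalues (σ k) ≤ (∑ k, c k ^ 2) * ‖w‖ ^ 2 + (n + 1) * ((2 * ‖w‖ + δ) * δ) := by
  set s := ∑ k, c k ^ 2
  have hs : 0 < s := by
    have := Finset.single_le_sum (fun k _ => sq_nonneg (c k)) (Finset.mem_univ 0)
    rw [hc0] at this
    linarith
  constructor
  · have hlow := le_norm_sum_smul_sq hc hx
    have hup := norm_sum_smul_sq_le_of_gram hX hXx (hX.eigenvalues_le_of_antitone hσ) c
    simp only [Fintype.card_fin, Nat.cast_add, Nat.cast_one] at hlow
    have key : s * (s * ‖w‖ ^ 2 - 2 * ‖w‖ * ((n + 1) * δ)) ≤ s * hX.eigenvalues (σ ⊥) := by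
      nlinarith
    exact le_of_mul_le_mul_left key hs
  · rw [sum_eigenvalues_gram hX hXx]
    simpa using sum_norm_sq_le hc hx

end Gram

theorem colMat_transpose_mul_self {M n : ℕ} (v : Fin (n + 1) → Fin M → ℝ) :
    (colMat v)ᵀ * colMat v = gram ℝ fun k => toLp 2 (v k) := by
  ext j k
  simp [colMat, gram_apply, mul_apply, EuclideanSpace.inner_toLp_toLp, dotProduct, mul_comm]

theorem sq_sub_add_sum_erase_sq_le {ι : Type*} [Fintype ι] [DecidableEq ι] {μ : ι → ℝ}
    (hμ : ∀ k, 0 ≤ μ k) (i : ι) {a b ν : ℝ} (ha : a ≤ μ i) (hb : ∑ k, μ k ≤ b) (hνa : a ≤ ν)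
    (hνb : ν ≤ b) : (μ i - ν) ^ 2 + ∑ k ∈ univ.erase i, μ k ^ 2 ≤ 2 * (b - a) ^ 2 := by
  have hsplit := Finset.sum_erase_add _ μ (Finset.mem_univ i)
  have hrest : 0 ≤ ∑ k ∈ univ.erase i, μ k := Finset.sum_nonneg fun k _ => hμ k
  have htop : (μ i - ν) ^ 2 ≤ (b - a) ^ 2 := sq_le_sq' (by linarith) (by linarith)
  have hsq : ∑ k ∈ univ.erase i, μ k ^ 2 ≤ (b - a) ^ 2 :=
    (sum_sq_le_sq_sum_of_nonneg fun k _ => hμ k).trans (pow_le_pow_left₀ hrest (by linarith) 2)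
  linarith

theorem sq_sub_add_sum_sq_eigenvalues_gram_le {E : Type*} [NormedAddCommGroup E]
    [InnerProductSpace ℝ E] {n : ℕ} {X Y : Matrix (Fin (n + 1)) (Fin (n + 1)) ℝ}
    (hX : X.IsHermitian) (hY : Y.IsHermitian) {x : Fin (n + 1) → E} {c : Fin (n + 1) → ℝ} {w : E}
    (hXx : X = gram ℝ x) (hYw : Y = gram ℝ fun k => c k • w) {σ σ' : Equiv.Perm (Fin (n + 1))}
    (hσ : Antitone (hX.eigenvalues ∘ σ)) (hσ' : Antitone (hY.eigenvalues ∘ σ'))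
    (hc : ∀ k, |c k| ≤ 1) (hc0 : c 0 = 1) {δ : ℝ} (hx : ∀ k, ‖x k - c k • w‖ ≤ δ) :
    ((hX.eigenvalues ∘ σ) 0 - (hY.eigenvalues ∘ σ') 0) ^ 2 +
        ∑ k ∈ univ.erase 0, (hX.eigenvalues ∘ σ) k ^ 2 ≤
      2 * ((n + 1) * ((4 * ‖w‖ + δ) * δ)) ^ 2 := by
  have hδ : 0 ≤ δ := (norm_nonneg _).trans (hx 0)
  obtain ⟨hX0, hXsum⟩ := gram_eigenvalues_bounds hX hXx hσ hc hc0 hx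
  obtain ⟨hY0, hYsum⟩ := gram_eigenvalues_bounds hY hYw hσ' hc hc0 (w := w) (δ := 0) (by simp)
  have hYtop : hY.eigenvalues (σ' 0) ≤ ∑ k, hY.eigenvalues (σ' k) :=
    Finset.single_le_sum (f := fun k => hY.eigenvalues (σ' k))
      (fun k _ => eigenvalues_nonneg_of_eq_gram hY hYw _) (Finset.mem_univ 0)
  have hgap : 0 ≤ 2 * ‖w‖ * ((n + 1) * δ) := by positivity
  have hgap' : 0 ≤ (n + 1) * ((2 * ‖w‖ + δ) * δ) := by positivity
  refine (sq_sub_add_sum_erase_sq_le (fun k => eigenvalues_nonneg_of_eq_gram hX hXx _) 0 hX0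
    hXsum ?_ ?_).trans (le_of_eq (by ring))
  · simp only [Function.comp_apply]; linarith
  · simp only [Function.comp_apply]; linarith

theorem theorem_4_4_general {M : ℕ} (Msq A : Matrix (Fin M) (Fin M) ℝ)
    (hMsq : Msq.PosDef) (hA : A.PosDef) (U₀ F : Fin M → ℝ) :
    ∃ C > 0, ∀ n : ℕ, 1 ≤ n → ∀ τ : ℝ, 0 < τ → τ < 1 →
      τ * spec A < 1 → spec (1 - τ • A) < 1 → (n : ℝ) * τ ≤ 1 →
      ∀ U : ℕ → Fin M → ℝ, U 0 = U₀ →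
        (∀ k : ℕ, 1 ≤ k → U k = (Msq⁻¹ * (1 + τ • A)⁻¹ * Msq).mulVec (U (k - 1)) +
          τ • (Msq⁻¹ * (1 + τ • A)⁻¹ * Msq⁻¹).mulVec F) →
        ∀ (hX : ((colMat fun k : Fin (n + 1) => U (k : ℕ))ᵀ *
            (colMat fun k : Fin (n + 1) => U (k : ℕ))).IsHermitian)
          (hXbar : ((colMat fun k : Fin (n + 1) => (1 - τ * spec A) ^ (k : ℕ) • U₀)ᵀ *
            (colMat fun k : Fin (n + 1) => (1 - τ * spec A) ^ (k : ℕ) • U₀)).IsHermitian)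
          (μ ν : Fin (n + 1) → ℝ)
          (σ σ' : Equiv.Perm (Fin (n + 1))),
          μ = hX.eigenvalues ∘ σ → Antitone μ →
          ν = hXbar.eigenvalues ∘ σ' → Antitone ν →
          (μ 0 - ν 0) ^ 2 + ∑ k ∈ Finset.univ.erase (0 : Fin (n + 1)), μ k ^ 2 ≤
            C * (n : ℝ) ^ 4 * τ ^ 2 := by
  obtain ⟨K, hK, hUK⟩ := exists_norm_backwardEuler_sub_le Msq A
    ((isUnit_iff_isUnit_det Msq).mp hMsq.isUnit) hA.posSemidef U₀ F
  obtain ⟨u, hu⟩ : ∃ u, ‖toLp 2 U₀‖ = u := ⟨_, rfl⟩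
  refine ⟨8 * ((4 * u + K) * K) ^ 2 + 1, by positivity, ?_⟩
  intro n hn τ hτ _ hτA _ hnτ U hU0 hU hX hXbar μ ν σ σ' rfl hμ rfl hν
  have hr : ∀ k : Fin (n + 1), |(1 - τ * spec A) ^ (k : ℕ)| ≤ 1 := fun k => by
    have : 0 ≤ τ * spec A := mul_nonneg hτ.le (norm_nonneg _)
    rw [abs_pow]
    exact pow_le_one₀ (abs_nonneg _) (abs_le.mpr ⟨by linarith, by linarith⟩)
  have hδ : ∀ k : Fin (n + 1),
      ‖toLp 2 (U k) - (1 - τ * spec A) ^ (k : ℕ) • toLp 2 U₀‖ ≤ K * (n * τ) :=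
    fun k => (hUK τ hτ.le hτA.le U hU0 hU k).trans (by gcongr; exact_mod_cast k.is_le)
  refine (sq_sub_add_sum_sq_eigenvalues_gram_le hX hXbar (colMat_transpose_mul_self _)
    (colMat_transpose_mul_self _) hμ hν hr (by simp) hδ).trans ?_
  have hu0 : 0 ≤ u := hu ▸ norm_nonneg _
  have hn2 : (n : ℝ) + 1 ≤ 2 * n := by
    have : (1 : ℝ) ≤ n := by exact_mod_cast hn
    linarith
  rw [hu]
  calc _ ≤ 2 * ((2 * n) * ((4 * u + K) * (K * (n * τ)))) ^ 2 := by
        gcongr; exact mul_le_of_le_one_right hK hnτ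
    _ = 8 * ((4 * u + K) * K) ^ 2 * (n : ℝ) ^ 4 * τ ^ 2 := by ring
    _ ≤ _ := by gcongr; linarith

/-- **Theorem 4.4.** There is a constant `C > 0`, independent of `n` and `τ`, such
that for all `n ≥ 1` and `τ ∈ (0,1)` with `max{τ‖𝒜‖₂, ‖I - τ𝒜‖₂} < 1` and `nτ ≤ 1`:
with `X = UᵀU` for the backward Euler iterates `U_k` (eigenvalues `μ` in decreasing
order) and `X̄* = Ū*ᵀŪ*` for `Ū*_k = (1 - τ‖𝒜‖₂)^k U₀` (eigenvalues `ν` in decreasing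
order), one has `(λ₀(X) - λ₀(X̄*))² + ∑_{k=1}^n λ_k(X)² ≤ C n⁴ τ²`. -/
theorem theorem_4_4 {M : ℕ} (Mmat Msq A : Matrix (Fin M) (Fin M) ℝ)
    (hM : Mmat.PosDef) (hMsq : Msq.PosDef) (hsq : Msq * Msq = Mmat)
    (hA : A.PosDef) (U₀ F : Fin M → ℝ) :
    ∃ C > 0, ∀ n : ℕ, 1 ≤ n → ∀ τ : ℝ, 0 < τ → τ < 1 →
      τ * spec A < 1 → spec (1 - τ • A) < 1 → (n : ℝ) * τ ≤ 1 →
      ∀ U : ℕ → Fin M → ℝ, U 0 = U₀ →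
        (∀ k : ℕ, 1 ≤ k → U k = (Msq⁻¹ * (1 + τ • A)⁻¹ * Msq).mulVec (U (k - 1)) +
          τ • (Msq⁻¹ * (1 + τ • A)⁻¹ * Msq⁻¹).mulVec F) →
        ∀ (hX : ((colMat fun k : Fin (n + 1) => U (k : ℕ))ᵀ *
            (colMat fun k : Fin (n + 1) => U (k : ℕ))).IsHermitian)
          (hXbar : ((colMat fun k : Fin (n + 1) => (1 - τ * spec A) ^ (k : ℕ) • U₀)ᵀ *
            (colMat fun k : Fin (n + 1) => (1 - τ * spec A) ^ (k : ℕ) • U₀)).IsHermitian)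
          (μ ν : Fin (n + 1) → ℝ)
          (σ σ' : Equiv.Perm (Fin (n + 1))),
          μ = hX.eigenvalues ∘ σ → Antitone μ →
          ν = hXbar.eigenvalues ∘ σ' → Antitone ν →
          (μ 0 - ν 0) ^ 2 + ∑ k ∈ Finset.univ.erase (0 : Fin (n + 1)), μ k ^ 2 ≤
            C * (n : ℝ) ^ 4 * τ ^ 2 :=
  theorem_4_4_general Msq A hMsq hA U₀ F
end
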